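/- arXiv:1405.7481 — 4 statements merged into one kernel-verified Lean document; each statement's English description precedes it below -/
import Mathlib

section
/- Let P and Q be finitely additive probabilities on ({0,1}^∞, Σ), where Σ contains all cylinders, and suppose P(ω^t) > 0 for every cylinder ω^t. If P merges with Q (i.e., for every ε > 0, Q({ω : sup_{E∈Σ} |P(E|ω^t) − Q(E|ω^t)| > ε}) → 0 as t → ∞), then Q is absolutely continuous with respect to P, in the sense that for every sequence of events (E_n), P(E_n) → 0 implies Q(E_n) → 0. -/
/-! Given `η > 0`, merging yields a time `T` at which the set `B` of paths whose length-`T`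
cylinder has some event with `|P(E | C) - Q(E | C)| > η / 2` has `Q(B) < η / 2`. The
length-`T` cylinders form a finite partition, each cell of `P`-mass at least some `δ > 0`.
On a cell `C` outside `B`, `Q(E | C) ≤ P(E | C) + η / 2 ≤ P(E) / δ + η / 2`; summing over
the partition gives `Q(E) ≤ P(E) / δ + η` for every event `E`, and such a uniform bound
for every `η` forces `Q ≪ P`. -/

open Filter Topology


/-- A path in `{0,1}^∞`. -/
abbrev BinSeq := ℕ → Bool

/-- The cylinder of length `t` with base `ω`: all sequences agreeing with `ω`
in the first `t` coordinates. -/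
def cyl {X : Type*} (ω : ℕ → X) (t : ℕ) : Set (ℕ → X) := {ω' | ∀ i < t, ω' i = ω i}

/-- An algebra of subsets of `Ω`. -/
structure SetAlgebra (Ω : Type*) where
  sets : Set (Set Ω)
  univ_mem : Set.univ ∈ sets
  compl_mem : ∀ S ∈ sets, Sᶜ ∈ sets
  union_mem : ∀ S ∈ sets, ∀ T ∈ sets, S ∪ T ∈ sets

/-- The algebra is a σ-algebra: closed under countable unions. -/
def SetAlgebra.IsSigmaAlgebra {Ω : Type*} (A : SetAlgebra Ω) : Prop :=
  ∀ f : ℕ → Set Ω, (∀ n, f n ∈ A.sets) → (⋃ n, f n) ∈ A.sets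

/-- The power-set algebra. -/
def SetAlgebra.top (Ω : Type*) : SetAlgebra Ω :=
  ⟨Set.univ, trivial, fun _ _ => trivial, fun _ _ _ _ => trivial⟩

/-- A finitely additive probability on `(Ω, A)`.  The function `m` is defined on all
subsets for convenience; only its values on `A.sets` are constrained. -/
structure FA {Ω : Type*} (A : SetAlgebra Ω) where
  m : Set Ω → ℝ
  nonneg : ∀ S ∈ A.sets, 0 ≤ m S
  total : m Set.univ = 1
  add : ∀ S ∈ A.sets, ∀ T ∈ A.sets, Disjoint S T → m (S ∪ T) = m S + m T

/-- Conditional probability `P(E | C) = P(E ∩ C) / P(C)`. -/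
noncomputable def FA.cond {Ω : Type*} {A : SetAlgebra Ω} (P : FA A) (E C : Set Ω) : ℝ :=
  P.m (E ∩ C) / P.m C

/-- `Q` is absolutely continuous w.r.t. `P` (written `Q ≪ P` in the paper):
for every sequence of events, `P(Eₙ) → 0` implies `Q(Eₙ) → 0`. -/
def AbsCont {Ω : Type*} {A : SetAlgebra Ω} (P Q : FA A) : Prop :=
  ∀ E : ℕ → Set Ω, (∀ n, E n ∈ A.sets) →
    Tendsto (fun n => P.m (E n)) atTop (𝓝 0) → Tendsto (fun n => Q.m (E n)) atTop (𝓝 0)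

/-- `P` merges with `Q`: for every `ε > 0`, the `Q`-probability of the set of paths where
some event has conditional probabilities (given the first `t` coordinates) differing by
more than `ε` tends to `0` as `t → ∞`.  (`sup_E |P(E|ωᵗ) - Q(E|ωᵗ)| > ε` is expressed
equivalently as `∃ E`.) -/
def Merges {A : SetAlgebra BinSeq} (P Q : FA A) : Prop :=
  ∀ ε > 0, Tendsto
    (fun t => Q.m {ω | ∃ E ∈ A.sets, ε < |P.cond E (cyl ω t) - Q.cond E (cyl ω t)|})
    atTop (𝓝 0)

/-- Membership in the algebra `F` generated by the cylinders of `{0,1}^∞`: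
the finite unions of cylinders (the empty union giving `∅`). -/
def InCylAlg (S : Set BinSeq) : Prop :=
  ∃ (n : ℕ) (f : Fin n → BinSeq × ℕ), S = ⋃ i, cyl (f i).1 (f i).2

/-- `Q` agrees with `P` on the algebra generated by cylinders, i.e. `Q` is an
extension of `P_F` from `F` to `Σ`. -/
def ExtAgree {A : SetAlgebra BinSeq} (P Q : FA A) : Prop :=
  ∀ S, InCylAlg S → Q.m S = P.m S

/-- `P` is an extreme point of the set `E(P_F, F, Σ)` of extensions of its restriction
to the cylinder algebra: any representation of `P` as a nontrivial convex combination
of two extensions forces the two extensions to coincide (with `P`). -/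
def ExtremePoint {A : SetAlgebra BinSeq} (P : FA A) : Prop :=
  ∀ Q R : FA A, ExtAgree P Q → ExtAgree P R →
    ∀ α : ℝ, 0 < α → α < 1 →
      (∀ S ∈ A.sets, P.m S = α * Q.m S + (1 - α) * R.m S) →
      ∀ S ∈ A.sets, Q.m S = R.m S

/-- `P` is strongly nonatomic (Savagean): every event can be split in any proportion. -/
def StronglyNonatomic {Ω : Type*} {A : SetAlgebra Ω} (P : FA A) : Prop :=
  ∀ E ∈ A.sets, ∀ α : ℝ, 0 ≤ α → α ≤ 1 → ∃ F ∈ A.sets, F ⊆ E ∧ P.m F = α * P.m E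

/-- The Blackwell–Dubins property: `P` merges with every `Q ≪ P`. -/
def BDProp {A : SetAlgebra BinSeq} (P : FA A) : Prop :=
  ∀ Q : FA A, AbsCont P Q → Merges P Q

open MeasureTheory Function

theorem SetAlgebra.isSetAlgebra {Ω : Type*} (A : SetAlgebra Ω) : IsSetAlgebra A.sets where
  empty_mem := by simpa using A.compl_mem _ A.univ_mem
  compl_mem s hs := A.compl_mem s hs
  union_mem s t hs ht := A.union_mem s hs t ht

namespace FA

variable {Ω : Type*} {A : SetAlgebra Ω} (P : FA A)

theorem m_empty : P.m ∅ = 0 := by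
  have h := P.add _ A.univ_mem _ A.isSetAlgebra.empty_mem (Set.disjoint_empty _)
  rw [Set.union_empty] at h
  linarith

theorem m_mono {S T : Set Ω} (hS : S ∈ A.sets) (hT : T ∈ A.sets) (hST : S ⊆ T) :
    P.m S ≤ P.m T := by
  have hdiff := A.isSetAlgebra.sdiff_mem hT hS
  have h := P.add S hS (T \ S) hdiff disjoint_sdiff_self_right
  rw [Set.union_sdiff_cancel hST] at h
  linarith [P.nonneg _ hdiff]

theorem m_biUnion_finset {ι : Type*} {C : ι → Set Ω} (s : Finset ι)
    (hC : ∀ i ∈ s, C i ∈ A.sets) (hdisj : (s : Set ι).PairwiseDisjoint C) :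
    P.m (⋃ i ∈ s, C i) = ∑ i ∈ s, P.m (C i) := by
  classical
  induction s using Finset.induction_on with
  | empty => simpa using P.m_empty
  | insert a s ha ih =>
    have hC' : ∀ i ∈ s, C i ∈ A.sets := fun i hi => hC i (Finset.mem_insert_of_mem hi)
    have hdisj_a : Disjoint (C a) (⋃ i ∈ s, C i) :=
      Set.disjoint_iUnion₂_right.2 fun i hi =>
        hdisj (Finset.mem_insert_self a s) (Finset.mem_insert_of_mem hi)
          (ne_of_mem_of_not_mem hi ha).symm
    rw [Finset.set_biUnion_insert, Finset.sum_insert ha,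
      P.add _ (hC a (Finset.mem_insert_self a s)) _ (A.isSetAlgebra.biUnion_mem s hC') hdisj_a,
      ih hC' (hdisj.subset (by simp))]

/-- Also when `P.m C = 0`: then `P.cond E C = 0` (as `x / 0 = 0`) and `P.m (E ∩ C) = 0`. -/
theorem m_inter_eq_mul_cond {E C : Set Ω} (hE : E ∈ A.sets) (hC : C ∈ A.sets) :
    P.m (E ∩ C) = P.m C * P.cond E C := by
  rcases (P.nonneg C hC).eq_or_lt with hC0 | hCpos
  · have hle := P.m_mono (A.isSetAlgebra.inter_mem hE hC) hC Set.inter_subset_right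
    have hge := P.nonneg _ (A.isSetAlgebra.inter_mem hE hC)
    rw [← hC0] at hle ⊢
    linarith
  · rw [cond, mul_div_cancel₀ _ hCpos.ne']

theorem cond_le_inv_mul {E C : Set Ω} (hE : E ∈ A.sets) (hC : C ∈ A.sets) {δ : ℝ}
    (hδ : 0 < δ) (hδC : δ ≤ P.m C) : P.cond E C ≤ δ⁻¹ * P.m E := by
  rw [cond, div_eq_inv_mul]
  exact mul_le_mul (inv_anti₀ hδ hδC) (P.m_mono (A.isSetAlgebra.inter_mem hE hC) hE
    Set.inter_subset_left) (P.nonneg _ (A.isSetAlgebra.inter_mem hE hC)) (inv_nonneg.2 hδ.le)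

theorem m_inter_le_of_abs_cond_sub_le (Q : FA A) {E C : Set Ω} (hE : E ∈ A.sets)
    (hC : C ∈ A.sets) {δ ε : ℝ} (hδ : 0 < δ) (hδC : δ ≤ P.m C)
    (hclose : |P.cond E C - Q.cond E C| ≤ ε) :
    Q.m (E ∩ C) ≤ Q.m C * (δ⁻¹ * P.m E + ε) := by
  have hQcond : Q.cond E C ≤ δ⁻¹ * P.m E + ε := by
    linarith [(abs_le.1 hclose).1, P.cond_le_inv_mul hE hC hδ hδC]
  rw [Q.m_inter_eq_mul_cond hE hC]
  exact mul_le_mul_of_nonneg_left hQcond (Q.nonneg C hC)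

section Partition

variable {ι : Type*} [Fintype ι] {C : ι → Set Ω}

theorem sum_m_inter_eq (hC : ∀ i, C i ∈ A.sets) (hdisj : Pairwise (Disjoint on C))
    (hcover : ⋃ i, C i = Set.univ) {E : Set Ω} (hE : E ∈ A.sets) :
    ∑ i, P.m (E ∩ C i) = P.m E := by
  have hdisj' : ((Finset.univ : Finset ι) : Set ι).PairwiseDisjoint (fun i => E ∩ C i) :=
    fun i _ j _ hij => (hdisj hij).mono Set.inter_subset_right Set.inter_subset_right
  rw [← P.m_biUnion_finset _ (fun i _ => A.isSetAlgebra.inter_mem hE (hC i)) hdisj']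
  simp [← Set.inter_iUnion, hcover]

theorem sum_m_eq_one (hC : ∀ i, C i ∈ A.sets) (hdisj : Pairwise (Disjoint on C))
    (hcover : ⋃ i, C i = Set.univ) : ∑ i, P.m (C i) = 1 := by
  simpa [P.total] using P.sum_m_inter_eq hC hdisj hcover A.univ_mem

theorem m_le_of_abs_cond_sub_le (Q : FA A) (hC : ∀ i, C i ∈ A.sets)
    (hdisj : Pairwise (Disjoint on C)) (hcover : ⋃ i, C i = Set.univ) {δ ε : ℝ} (hδ : 0 < δ)
    (hδC : ∀ i, δ ≤ P.m (C i)) (hε : 0 ≤ ε) {B E : Set Ω} (hB : B ∈ A.sets)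
    (hE : E ∈ A.sets)
    (hclose : ∀ i, ¬ C i ⊆ B → |P.cond E (C i) - Q.cond E (C i)| ≤ ε) :
    Q.m E ≤ δ⁻¹ * P.m E + ε + Q.m B := by
  have hk : 0 ≤ δ⁻¹ * P.m E + ε := by
    have := P.nonneg E hE
    positivity
  have hcell : ∀ i, Q.m (E ∩ C i) ≤ Q.m (C i) * (δ⁻¹ * P.m E + ε) + Q.m (B ∩ C i) := by
    intro i
    have hBC := Q.nonneg _ (A.isSetAlgebra.inter_mem hB (hC i))
    by_cases hsub : C i ⊆ B
    · rw [Set.inter_eq_right.2 hsub]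
      have := Q.m_mono (A.isSetAlgebra.inter_mem hE (hC i)) (hC i) Set.inter_subset_right
      nlinarith [Q.nonneg _ (hC i)]
    · linarith [P.m_inter_le_of_abs_cond_sub_le Q hE (hC i) hδ (hδC i) (hclose i hsub)]
  calc Q.m E = ∑ i, Q.m (E ∩ C i) := (Q.sum_m_inter_eq hC hdisj hcover hE).symm
    _ ≤ ∑ i, (Q.m (C i) * (δ⁻¹ * P.m E + ε) + Q.m (B ∩ C i)) :=
      Finset.sum_le_sum fun i _ => hcell i
    _ = δ⁻¹ * P.m E + ε + Q.m B := by
      rw [Finset.sum_add_distrib, ← Finset.sum_mul, Q.sum_m_eq_one hC hdisj hcover,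
        Q.sum_m_inter_eq hC hdisj hcover hB, one_mul]

end Partition

end FA

theorem absCont_of_forall_le {Ω : Type*} {A : SetAlgebra Ω} {P Q : FA A}
    (h : ∀ η > 0, ∃ K : ℝ, ∀ E ∈ A.sets, Q.m E ≤ K * P.m E + η) : AbsCont P Q := by
  intro E hE hP
  refine tendsto_order.2 ⟨fun a ha => .of_forall fun n => ha.trans_le (Q.nonneg _ (hE n)),
    fun b hb => ?_⟩
  obtain ⟨K, hK⟩ := h (b / 2) (half_pos hb)
  have hKP : Tendsto (fun n => K * P.m (E n)) atTop (𝓝 0) := by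
    simpa using hP.const_mul K
  filter_upwards [hKP.eventually (gt_mem_nhds (half_pos hb))] with n hn
  linarith [hK _ (hE n)]

/-- Cylinders indexed by finite words rather than by a path, as `cyl` is, so that those of a
fixed length form a finite partition indexed by `Fin T → X`. -/
def prefixCyl {X : Type*} (T : ℕ) (s : Fin T → X) : Set (ℕ → X) :=
  {ω | ∀ i : Fin T, ω i = s i}

section PrefixCyl

variable {X : Type*} {T : ℕ}

theorem mem_prefixCyl {s : Fin T → X} {ω : ℕ → X} :
    ω ∈ prefixCyl T s ↔ (fun i : Fin T => ω i) = s :=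
  funext_iff.symm

theorem cyl_eq_prefixCyl (ω : ℕ → X) (T : ℕ) : cyl ω T = prefixCyl T (fun i => ω i) := by
  ext ω'
  exact ⟨fun h i => h i i.isLt, fun h i hi => h ⟨i, hi⟩⟩

theorem prefixCyl_eq_cyl [Inhabited X] (s : Fin T → X) :
    prefixCyl T s = cyl (fun i => if h : i < T then s ⟨i, h⟩ else default) T := by
  rw [cyl_eq_prefixCyl]
  simp

theorem pairwise_disjoint_prefixCyl : Pairwise (Disjoint on prefixCyl (X := X) T) :=
  fun _ _ hss' => Set.disjoint_left.2 fun _ hs hs' =>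
    hss' ((mem_prefixCyl.1 hs).symm.trans (mem_prefixCyl.1 hs'))

theorem iUnion_prefixCyl : ⋃ s, prefixCyl (X := X) T s = Set.univ :=
  Set.eq_univ_of_forall fun _ => Set.mem_iUnion.2 ⟨_, mem_prefixCyl.2 rfl⟩

theorem prefixCyl_subset_setOf_cyl {p : Set (ℕ → X) → Prop} {s : Fin T → X}
    (hs : p (prefixCyl T s)) : prefixCyl T s ⊆ {ω | p (cyl ω T)} := by
  intro ω hω
  show p (cyl ω T)
  rwa [cyl_eq_prefixCyl, mem_prefixCyl.1 hω]

theorem setOf_cyl_eq_biUnion [Fintype X] (p : Set (ℕ → X) → Prop) [DecidablePred p]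
    (T : ℕ) :
    {ω | p (cyl ω T)} =
      ⋃ s ∈ Finset.univ.filter (fun s => p (prefixCyl T s)), prefixCyl T s := by
  ext ω
  simp [mem_prefixCyl, cyl_eq_prefixCyl]

theorem setOf_cyl_mem [Fintype X] [Inhabited X] {A : SetAlgebra (ℕ → X)}
    (hcyl : ∀ (ω : ℕ → X) (t : ℕ), cyl ω t ∈ A.sets) (p : Set (ℕ → X) → Prop)
    (T : ℕ) :
    {ω | p (cyl ω T)} ∈ A.sets := by
  classical
  rw [setOf_cyl_eq_biUnion]
  exact A.isSetAlgebra.biUnion_mem _ fun s _ => prefixCyl_eq_cyl s ▸ hcyl _ _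

end PrefixCyl

theorem merging_implies_absolute_continuity_general
    (A : SetAlgebra BinSeq)
    (hcyl : ∀ (ω : BinSeq) (t : ℕ), cyl ω t ∈ A.sets)
    (P Q : FA A) (hpos : ∀ (ω : BinSeq) (t : ℕ), 0 < P.m (cyl ω t))
    (hmerge : Merges P Q) : AbsCont P Q := by
  refine absCont_of_forall_le fun η hη => ?_
  have hη2 := half_pos hη
  obtain ⟨T, hT⟩ := ((hmerge _ hη2).eventually (gt_mem_nhds hη2)).exists
  obtain ⟨s₀, hs₀⟩ := Finite.exists_min fun s : Fin T → Bool => P.m (prefixCyl T s)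
  have hδ : 0 < P.m (prefixCyl T s₀) := prefixCyl_eq_cyl s₀ ▸ hpos _ _
  refine ⟨(P.m (prefixCyl T s₀))⁻¹, fun E hE => ?_⟩
  let far : Set BinSeq → Prop := fun C => ∃ F ∈ A.sets, η / 2 < |P.cond F C - Q.cond F C|
  have hclose : ∀ s, ¬ prefixCyl T s ⊆ {ω | far (cyl ω T)} →
      |P.cond E (prefixCyl T s) - Q.cond E (prefixCyl T s)| ≤ η / 2 := fun s hs => by
    by_contra! hfar
    exact hs (prefixCyl_subset_setOf_cyl ⟨E, hE, hfar⟩)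
  have hbound := P.m_le_of_abs_cond_sub_le Q (fun s => prefixCyl_eq_cyl s ▸ hcyl _ _)
    pairwise_disjoint_prefixCyl iUnion_prefixCyl hδ hs₀ hη2.le (setOf_cyl_mem hcyl far T) hE
    hclose
  linarith

/-- Proposition 1: if `P(ωᵗ) > 0` for every cylinder and `P` merges with
`Q`, then `Q ≪ P`. -/
theorem merging_implies_absolute_continuity
    (A : SetAlgebra BinSeq) (hσ : A.IsSigmaAlgebra)
    (hcyl : ∀ (ω : BinSeq) (t : ℕ), cyl ω t ∈ A.sets)
    (P Q : FA A) (hpos : ∀ (ω : BinSeq) (t : ℕ), 0 < P.m (cyl ω t))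
    (hmerge : Merges P Q) : AbsCont P Q :=
  merging_implies_absolute_continuity_general A hcyl P Q hpos hmerge
end

section
/- Let P be a finitely additive probability on ({0,1}^∞, Σ) that is an extreme point of the set E(P_F, F, Σ) of finitely additive extensions to Σ of its restriction P_F to the algebra F generated by cylinders. Then P satisfies the Blackwell–Dubins property: for every finitely additive probability Q with Q ≪ P, P merges with Q. -/
open Filter Topology


/-!
If `P` is an extreme extension of its restriction to the cylinder algebra `F`, then `F` is
`P`-dense in `Σ`. Otherwise some event `E` stays `η`-far from `F`, and the charges
`S ↦ P(S ∩ E) - E_P[1_S · P(E | F_t)]`, which are dominated by `P` and vanish on unions of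
cylinders of length `t`, have an ultrafilter limit `ℓ ≠ 0` vanishing on `F`; then
`P = ½ (P + ℓ) + ½ (P - ℓ)` splits `P` nontrivially. An exhaustion argument (a finitely additive
Radon–Nikodym theorem) approximates `Q ≪ P` uniformly by a charge with a simple density with
respect to `P`, and by density of `F` this density may be taken constant on the cylinders of some
length `s`. On a cylinder `C` of length `t ≥ s` the approximating charge is then proportional to
`P`, so the cylinders on which `Q(· | C)` and `P(· | C)` differ by more than `ε` carry `Q`-mass
`O(η / ε)`.
-/
open Set

namespace SetAlgebra

variable {Ω : Type*} (A : SetAlgebra Ω)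

theorem empty_mem : (∅ : Set Ω) ∈ A.sets := by
  simpa using A.compl_mem _ A.univ_mem

variable {A} {S T : Set Ω}

theorem inter_mem (hS : S ∈ A.sets) (hT : T ∈ A.sets) : S ∩ T ∈ A.sets := by
  simpa [compl_union] using A.compl_mem _ (A.union_mem _ (A.compl_mem _ hS) _ (A.compl_mem _ hT))

theorem diff_mem (hS : S ∈ A.sets) (hT : T ∈ A.sets) : S \ T ∈ A.sets :=
  inter_mem hS (A.compl_mem _ hT)

theorem symmDiff_mem (hS : S ∈ A.sets) (hT : T ∈ A.sets) : symmDiff S T ∈ A.sets :=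
  A.union_mem _ (diff_mem hS hT) _ (diff_mem hT hS)

theorem biUnion_mem {ι : Type*} (s : Finset ι) {f : ι → Set Ω} (hf : ∀ i ∈ s, f i ∈ A.sets) :
    (⋃ i ∈ s, f i) ∈ A.sets := by
  classical
  induction s using Finset.induction_on with
  | empty => simpa using A.empty_mem
  | insert a s _ ih =>
    rw [Finset.set_biUnion_insert]
    exact A.union_mem _ (hf a (s.mem_insert_self a)) _
      (ih fun i hi => hf i (Finset.mem_insert_of_mem hi))

end SetAlgebra

def IsAdditive {Ω : Type*} (A : SetAlgebra Ω) (μ : Set Ω → ℝ) : Prop :=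
  ∀ S ∈ A.sets, ∀ T ∈ A.sets, Disjoint S T → μ (S ∪ T) = μ S + μ T

namespace IsAdditive

variable {Ω : Type*} {A : SetAlgebra Ω} {μ ν : Set Ω → ℝ} {S T : Set Ω}

theorem empty (hμ : IsAdditive A μ) : μ ∅ = 0 := by
  have := hμ ∅ A.empty_mem ∅ A.empty_mem (disjoint_bot_left)
  simp only [union_self] at this
  linarith

theorem inter_add_diff (hμ : IsAdditive A μ) (hS : S ∈ A.sets) (hT : T ∈ A.sets) :
    μ (S ∩ T) + μ (S \ T) = μ S := by
  rw [← hμ _ (A.inter_mem hS hT) _ (A.diff_mem hS hT) disjoint_sdiff_inter.symm, inter_union_sdiff]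

theorem diff (hμ : IsAdditive A μ) (hS : S ∈ A.sets) (hT : T ∈ A.sets) (hTS : T ⊆ S) :
    μ (S \ T) = μ S - μ T := by
  have := hμ.inter_add_diff hS hT
  rw [inter_eq_self_of_subset_right hTS] at this
  linarith

theorem biUnion (hμ : IsAdditive A μ) {ι : Type*} (s : Finset ι) {f : ι → Set Ω}
    (hf : ∀ i ∈ s, f i ∈ A.sets) (hd : (s : Set ι).PairwiseDisjoint f) :
    μ (⋃ i ∈ s, f i) = ∑ i ∈ s, μ (f i) := by
  classical
  induction s using Finset.induction_on with
  | empty => simpa using hμ.empty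
  | insert a s has ih =>
    have hs : ∀ i ∈ s, f i ∈ A.sets := fun i hi => hf i (Finset.mem_insert_of_mem hi)
    rw [Finset.coe_insert] at hd
    rw [Finset.set_biUnion_insert, Finset.sum_insert has,
      hμ _ (hf a (s.mem_insert_self a)) _ (A.biUnion_mem s hs), ih hs (hd.subset (subset_insert _ _))]
    refine disjoint_iUnion₂_right.2 fun i hi => hd (mem_insert a _) (mem_insert_of_mem _ hi) ?_
    rintro rfl
    exact has hi

theorem sub (hμ : IsAdditive A μ) (hν : IsAdditive A ν) : IsAdditive A (μ - ν) :=
  fun S hS T hT hST => by simp only [Pi.sub_apply, hμ S hS T hT hST, hν S hS T hT hST]; ring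

theorem neg (hμ : IsAdditive A μ) : IsAdditive A (-μ) :=
  fun S hS T hT hST => by simp only [Pi.neg_apply, hμ S hS T hT hST]; ring

theorem const_mul (hμ : IsAdditive A μ) (a : ℝ) : IsAdditive A (fun S => a * μ S) :=
  fun S hS T hT hST => by simp only [hμ S hS T hT hST]; ring

theorem finset_sum {ι : Type*} (s : Finset ι) {μ : ι → Set Ω → ℝ}
    (hμ : ∀ i ∈ s, IsAdditive A (μ i)) : IsAdditive A (fun S => ∑ i ∈ s, μ i S) :=
  fun S hS T hT hST => by
    rw [← Finset.sum_add_distrib]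
    exact Finset.sum_congr rfl fun i hi => hμ i hi S hS T hT hST

theorem inter_right (hμ : IsAdditive A μ) {C : Set Ω} (hC : C ∈ A.sets) :
    IsAdditive A (fun S => μ (S ∩ C)) :=
  fun S hS T hT hST => by
    simp only
    rw [union_inter_distrib_right]
    exact hμ _ (A.inter_mem hS hC) _ (A.inter_mem hT hC)
      (hST.mono inter_subset_left inter_subset_left)

theorem sum_abs_le (hμ : IsAdditive A μ) {η : ℝ} (hη : ∀ S ∈ A.sets, |μ S| ≤ η)
    (𝒮 : Finset (Set Ω)) (h𝒮 : ∀ C ∈ 𝒮, C ∈ A.sets) (hd : (𝒮 : Set (Set Ω)).PairwiseDisjoint id) :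
    ∑ C ∈ 𝒮, |μ C| ≤ 2 * η := by
  classical
  have hpart (p : Set Ω → Prop) [DecidablePred p] :
      μ (⋃ C ∈ 𝒮.filter p, C) = ∑ C ∈ 𝒮.filter p, μ C :=
    hμ.biUnion _ (fun C hC => h𝒮 C (Finset.mem_of_mem_filter C hC))
      (hd.subset (Finset.coe_subset.2 (Finset.filter_subset p 𝒮)))
  have hmem (p : Set Ω → Prop) [DecidablePred p] : (⋃ C ∈ 𝒮.filter p, C) ∈ A.sets :=
    A.biUnion_mem _ fun C hC => h𝒮 C (Finset.mem_of_mem_filter C hC)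
  have hpos : ∑ C ∈ 𝒮.filter (0 ≤ μ ·), |μ C| = μ (⋃ C ∈ 𝒮.filter (0 ≤ μ ·), C) := by
    rw [hpart]
    exact Finset.sum_congr rfl fun C hC => abs_of_nonneg (Finset.mem_filter.1 hC).2
  have hneg : ∑ C ∈ 𝒮.filter (¬ 0 ≤ μ ·), |μ C| = -μ (⋃ C ∈ 𝒮.filter (¬ 0 ≤ μ ·), C) := by
    rw [hpart, ← Finset.sum_neg_distrib]
    exact Finset.sum_congr rfl fun C hC => abs_of_neg (not_le.1 (Finset.mem_filter.1 hC).2)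
  rw [← Finset.sum_filter_add_sum_filter_not 𝒮 (0 ≤ μ ·), hpos, hneg]
  linarith [abs_le.1 (hη _ (hmem (0 ≤ μ ·))), abs_le.1 (hη _ (hmem (¬ 0 ≤ μ ·)))]

end IsAdditive

namespace FA

variable {Ω : Type*} {A : SetAlgebra Ω} (P : FA A) {S T E C : Set Ω}

theorem isAdditive : IsAdditive A P.m := P.add

theorem mono (hS : S ∈ A.sets) (hT : T ∈ A.sets) (hST : S ⊆ T) : P.m S ≤ P.m T := by
  have := P.isAdditive.diff hT hS hST
  linarith [P.nonneg _ (A.diff_mem hT hS)]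

theorem le_one (hS : S ∈ A.sets) : P.m S ≤ 1 :=
  P.total ▸ P.mono hS A.univ_mem (subset_univ S)

theorem union_le (hS : S ∈ A.sets) (hT : T ∈ A.sets) : P.m (S ∪ T) ≤ P.m S + P.m T := by
  rw [← union_sdiff_self, P.add S hS _ (A.diff_mem hT hS) disjoint_sdiff_right]
  linarith [P.mono (A.diff_mem hT hS) hT sdiff_subset]

theorem abs_sub_inter_le (hE : E ∈ A.sets) (hS : S ∈ A.sets) (hT : T ∈ A.sets) :
    |P.m (E ∩ S) - P.m (E ∩ T)| ≤ P.m (symmDiff S T) := by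
  have key {S T} (hS : S ∈ A.sets) (hT : T ∈ A.sets) :
      P.m (E ∩ S) ≤ P.m (E ∩ T) + P.m (symmDiff S T) := by
    have hsub : E ∩ S ⊆ (E ∩ T) ∪ symmDiff S T := fun ω ⟨hωE, hωS⟩ => by
      by_cases hωT : ω ∈ T
      · exact Or.inl ⟨hωE, hωT⟩
      · exact Or.inr (Or.inl ⟨hωS, hωT⟩)
    exact (P.mono (A.inter_mem hE hS) (A.union_mem _ (A.inter_mem hE hT) _ (A.symmDiff_mem hS hT))
      hsub).trans (P.union_le (A.inter_mem hE hT) (A.symmDiff_mem hS hT))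
  rw [abs_le]
  constructor
  · have := key hT hS
    rw [symmDiff_comm] at this
    linarith
  · linarith [key hS hT]

theorem cond_nonneg (hE : E ∈ A.sets) (hC : C ∈ A.sets) : 0 ≤ P.cond E C :=
  div_nonneg (P.nonneg _ (A.inter_mem hE hC)) (P.nonneg _ hC)

theorem cond_le_one (hE : E ∈ A.sets) (hC : C ∈ A.sets) : P.cond E C ≤ 1 :=
  div_le_one_of_le₀ (P.mono (A.inter_mem hE hC) hC inter_subset_right) (P.nonneg _ hC)

theorem cond_mul (hE : E ∈ A.sets) (hC : C ∈ A.sets) : P.cond E C * P.m C = P.m (E ∩ C) := by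
  rcases (P.nonneg _ hC).eq_or_lt with h | h
  · rw [← h, mul_zero]
    exact le_antisymm (P.nonneg _ (A.inter_mem hE hC))
      (h ▸ P.mono (A.inter_mem hE hC) hC inter_subset_right)
  · exact div_mul_cancel₀ _ h.ne'

def perturb (ℓ : Set Ω → ℝ) (hℓ : IsAdditive A ℓ) (hℓP : ∀ S ∈ A.sets, -P.m S ≤ ℓ S)
    (huniv : ℓ univ = 0) : FA A where
  m S := P.m S + ℓ S
  nonneg S hS := by linarith [hℓP S hS]
  total := by rw [P.total, huniv, add_zero]
  add S hS T hT hST := by rw [P.add S hS T hT hST, hℓ S hS T hT hST]; ring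

end FA

theorem AbsCont.exists_pos {Ω : Type*} {A : SetAlgebra Ω} {P Q : FA A} (h : AbsCont P Q)
    {ε : ℝ} (hε : 0 < ε) : ∃ δ > 0, ∀ S ∈ A.sets, P.m S < δ → Q.m S < ε := by
  by_contra! hcon
  choose S hSA hSP hSQ using fun n : ℕ => hcon (1 / (n + 1)) Nat.one_div_pos_of_nat
  have hP : Tendsto (fun n => P.m (S n)) atTop (𝓝 0) :=
    squeeze_zero (fun n => P.nonneg _ (hSA n)) (fun n => (hSP n).le)
      tendsto_one_div_add_atTop_nhds_zero_nat
  linarith [ge_of_tendsto (h S hSA hP) (Eventually.of_forall hSQ)]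

section Partition

variable {Ω : Type*} {A : SetAlgebra Ω}

structure IsFinPartition (A : SetAlgebra Ω) (𝒟 : Finset (Set Ω)) : Prop where
  mem : ∀ C ∈ 𝒟, C ∈ A.sets
  pairwiseDisjoint : (𝒟 : Set (Set Ω)).PairwiseDisjoint id
  exists_mem : ∀ ω, ∃ C ∈ 𝒟, ω ∈ C

theorem IsFinPartition.sum_inter {𝒟 : Finset (Set Ω)} (h𝒟 : IsFinPartition A 𝒟)
    {μ : Set Ω → ℝ} (hμ : IsAdditive A μ) {S : Set Ω} (hS : S ∈ A.sets) :
    ∑ C ∈ 𝒟, μ (S ∩ C) = μ S := by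
  have hcover : S = ⋃ C ∈ 𝒟, S ∩ C := by
    ext ω
    simp only [mem_iUnion, mem_inter_iff, exists_prop]
    exact ⟨fun hω => (h𝒟.exists_mem ω).imp fun C hC => ⟨hC.1, hω, hC.2⟩, fun ⟨_, _, hω, _⟩ => hω⟩
  conv_rhs => rw [hcover]
  exact (hμ.biUnion 𝒟 (fun C hC => A.inter_mem hS (h𝒟.mem C hC))
    (h𝒟.pairwiseDisjoint.mono fun C => inter_subset_right)).symm

def IsCellUnion (𝒟 : Finset (Set Ω)) (S : Set Ω) : Prop :=
  ∀ C ∈ 𝒟, C ⊆ S ∨ Disjoint C S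

theorem disjoint_biUnion_of_notMem {𝒟 𝒟' : Finset (Set Ω)}
    (hd : (𝒟 : Set (Set Ω)).PairwiseDisjoint id) (h𝒟' : 𝒟' ⊆ 𝒟) {C : Set Ω} (hC : C ∈ 𝒟)
    (hC' : C ∉ 𝒟') : Disjoint C (⋃ C' ∈ 𝒟', C') := by
  refine disjoint_iUnion₂_right.2 fun C' hC'' => hd hC (h𝒟' hC'') ?_
  rintro rfl
  exact hC' hC''

theorem isCellUnion_biUnion {𝒟 𝒟' : Finset (Set Ω)} (hd : (𝒟 : Set (Set Ω)).PairwiseDisjoint id)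
    (h𝒟' : 𝒟' ⊆ 𝒟) : IsCellUnion 𝒟 (⋃ C ∈ 𝒟', C) := fun C hC => by
  by_cases hC' : C ∈ 𝒟'
  · exact Or.inl (subset_biUnion_of_mem (u := id) hC')
  · exact Or.inr (disjoint_biUnion_of_notMem hd h𝒟' hC hC')

def IsProportionalOn (P : FA A) (ν : Set Ω → ℝ) (C : Set Ω) : Prop :=
  ∃ c : ℝ, ∀ S ∈ A.sets, S ⊆ C → ν S = c * P.m S

namespace IsProportionalOn

variable {P : FA A} {C : Set Ω}

theorem inter_of_isCellUnion {𝒟 : Finset (Set Ω)} {F : Set Ω} (hF : IsCellUnion 𝒟 F)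
    (hC : C ∈ 𝒟) : IsProportionalOn P (fun S => P.m (S ∩ F)) C := by
  rcases hF C hC with hCF | hCF
  · exact ⟨1, fun S _ hSC => by
      simp only [inter_eq_self_of_subset_left (hSC.trans hCF), one_mul]⟩
  · exact ⟨0, fun S _ hSC => by
      simp only [(hCF.mono_left hSC).inter_eq, P.isAdditive.empty, zero_mul]⟩

theorem const_mul {ν : Set Ω → ℝ} (hν : IsProportionalOn P ν C) (a : ℝ) :
    IsProportionalOn P (fun S => a * ν S) C :=
  let ⟨c, hc⟩ := hν
  ⟨a * c, fun S hS hSC => by simp only [hc S hS hSC, mul_assoc]⟩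

theorem finset_sum {ι : Type*} (s : Finset ι) {ν : ι → Set Ω → ℝ}
    (hν : ∀ i ∈ s, IsProportionalOn P (ν i) C) :
    IsProportionalOn P (fun S => ∑ i ∈ s, ν i S) C := by
  choose! c hc using hν
  exact ⟨∑ i ∈ s, c i, fun S hS hSC => by
    rw [Finset.sum_mul]
    exact Finset.sum_congr rfl fun i hi => hc i hi S hS hSC⟩

theorem sub_mul_cond_le {ν : Set Ω → ℝ} (hν : IsProportionalOn P ν C) (Q : FA A)
    (hC : C ∈ A.sets) {E : Set Ω} (hE : E ∈ A.sets) (hEC : E ⊆ C) :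
    Q.m E - Q.m C * P.cond E C ≤ |ν C - Q.m C| + (Q.m E - ν E) := by
  obtain ⟨c, hc⟩ := hν
  rw [hc C hC le_rfl, hc E hE hEC, FA.cond, inter_eq_self_of_subset_left hEC]
  have hPE := P.nonneg E hE
  have hPEC := P.mono hE hC hEC
  rcases (P.nonneg C hC).eq_or_lt with h0 | hpos
  · rw [← h0, div_zero, le_antisymm (h0 ▸ hPEC) hPE]
    linarith [abs_nonneg (c * 0 - Q.m C)]
  · have hr : P.m E / P.m C ≤ 1 := div_le_one_of_le₀ hPEC hpos.le
    have hsplit : c * P.m E - Q.m C * (P.m E / P.m C) = P.m E / P.m C * (c * P.m C - Q.m C) := by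
      field_simp
    have := (mul_le_mul_of_nonneg_left (le_abs_self (c * P.m C - Q.m C))
      (div_nonneg hPE hpos.le)).trans (mul_le_of_le_one_left (abs_nonneg _) hr)
    linarith

end IsProportionalOn

def Disagree (P Q : FA A) (ε : ℝ) (C : Set Ω) : Prop :=
  ∃ E ∈ A.sets, ε < |P.cond E C - Q.cond E C|

theorem Disagree.exists_subset {P Q : FA A} {ε : ℝ} {C : Set Ω} (h : Disagree P Q ε C)
    (hε : 0 ≤ ε) (hC : C ∈ A.sets) :
    ∃ E ∈ A.sets, E ⊆ C ∧ ε * Q.m C ≤ Q.m E - Q.m C * P.cond E C := by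
  obtain ⟨E, hE, hlt⟩ := h
  have hEC := A.inter_mem hE hC
  have hQ := Q.cond_mul hE hC
  -- `Q(E') - Q(C) P(E' | C)` is `± Q(C) (Q(E | C) - P(E | C))` for `E' = E ∩ C` resp. `C \ E`
  rcases lt_abs.1 hlt with hlt | hlt
  · have hPC : P.m C ≠ 0 := fun h0 => by
      have : P.cond E C = 0 := by rw [FA.cond, h0, div_zero]
      linarith [Q.cond_nonneg hE hC]
    refine ⟨C \ E, A.diff_mem hC hE, sdiff_subset, ?_⟩
    have hdiff (R : FA A) : R.m (C \ E) = R.m C - R.m (E ∩ C) := by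
      rw [← sdiff_inter_self_eq_sdiff, R.isAdditive.diff hC hEC inter_subset_right]
    have hP : P.cond (C \ E) C = 1 - P.cond E C := by
      rw [FA.cond, FA.cond, inter_eq_self_of_subset_left sdiff_subset, hdiff, sub_div, div_self hPC]
    rw [hP, hdiff, ← hQ]
    nlinarith [Q.nonneg C hC]
  · refine ⟨E ∩ C, hEC, inter_subset_right, ?_⟩
    have hP : P.cond (E ∩ C) C = P.cond E C := by rw [FA.cond, FA.cond, inter_assoc, inter_self]
    rw [hP, ← hQ]
    nlinarith [Q.nonneg C hC]

open scoped Classical in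
theorem mul_m_biUnion_disagree_le {P Q : FA A} {ν : Set Ω → ℝ} {η ε : ℝ}
    (hν : IsAdditive A ν) (hQν : ∀ E ∈ A.sets, |Q.m E - ν E| ≤ η)
    {𝒟 : Finset (Set Ω)} (h𝒟 : ∀ C ∈ 𝒟, C ∈ A.sets) (hd : (𝒟 : Set (Set Ω)).PairwiseDisjoint id)
    (hprop : ∀ C ∈ 𝒟, IsProportionalOn P ν C) (hε : 0 ≤ ε) :
    ε * Q.m (⋃ C ∈ 𝒟.filter (Disagree P Q ε), C) ≤ 3 * η := by
  set 𝒷 := 𝒟.filter (Disagree P Q ε)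
  have h𝒷A : ∀ C ∈ 𝒷, C ∈ A.sets := fun C hC => h𝒟 C (Finset.mem_of_mem_filter C hC)
  have h𝒷d : (𝒷 : Set (Set Ω)).PairwiseDisjoint id :=
    hd.subset (Finset.coe_subset.2 (Finset.filter_subset _ _))
  choose! E hEA hEC hgap using fun C (hC : C ∈ 𝒷) =>
    (Finset.mem_filter.1 hC).2.exists_subset hε (h𝒷A C hC)
  have hEd : (𝒷 : Set (Set Ω)).PairwiseDisjoint E := h𝒷d.mono_on hEC
  have hρ : IsAdditive A (Q.m - ν) := Q.isAdditive.sub hν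
  calc ε * Q.m (⋃ C ∈ 𝒷, C) = ∑ C ∈ 𝒷, ε * Q.m C := by
        rw [Q.isAdditive.biUnion _ h𝒷A h𝒷d, Finset.mul_sum]
    _ ≤ ∑ C ∈ 𝒷, (|ν C - Q.m C| + (Q.m (E C) - ν (E C))) :=
        Finset.sum_le_sum fun C hC => (hgap C hC).trans
          ((hprop C (Finset.mem_of_mem_filter C hC)).sub_mul_cond_le Q (h𝒷A C hC) (hEA C hC)
            (hEC C hC))
    _ = ∑ C ∈ 𝒷, |(Q.m - ν) C| + (Q.m - ν) (⋃ C ∈ 𝒷, E C) := by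
        rw [Finset.sum_add_distrib, hρ.biUnion _ hEA hEd]
        simp only [Pi.sub_apply, abs_sub_comm]
    _ ≤ 2 * η + η :=
        add_le_add (hρ.sum_abs_le hQν 𝒷 h𝒷A h𝒷d)
          (le_of_abs_le (hQν _ (A.biUnion_mem 𝒷 hEA)))
    _ = 3 * η := by ring

end Partition

section RadonNikodym

variable {Ω : Type*} {A : SetAlgebra Ω}

theorem IsAdditive.exists_approx_hahn {μ : Set Ω → ℝ} (hμ : IsAdditive A μ) {M : ℝ}
    (hM : ∀ S ∈ A.sets, μ S ≤ M) {κ : ℝ} (hκ : 0 < κ) :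
    ∃ H ∈ A.sets, (∀ S ∈ A.sets, μ S ≤ μ H + κ) ∧ ∀ S ∈ A.sets, S ⊆ H → -κ ≤ μ S := by
  have hbdd : BddAbove (μ '' A.sets) := ⟨M, forall_mem_image.2 hM⟩
  have hsup : ∀ S ∈ A.sets, μ S ≤ sSup (μ '' A.sets) :=
    fun S hS => le_csSup hbdd (mem_image_of_mem μ hS)
  obtain ⟨_, ⟨H, hH, rfl⟩, hlt⟩ :=
    exists_lt_of_lt_csSup ⟨_, mem_image_of_mem μ A.univ_mem⟩ (sub_lt_self _ hκ)
  refine ⟨H, hH, fun S hS => by linarith [hsup S hS], fun S hS hSH => ?_⟩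
  linarith [hμ.diff hH hS hSH, hsup _ (A.diff_mem hH hS)]

namespace FA

/-- The charge with density `a · #{j | ω ∈ H j}` with respect to `P`. -/
noncomputable def withStepDensity (P : FA A) (a : ℝ) {k : ℕ} (H : Fin k → Set Ω)
    (E : Set Ω) : ℝ :=
  a * ∑ j, P.m (E ∩ H j)

variable (P : FA A) (a : ℝ) {k : ℕ} {H : Fin k → Set Ω}

theorem isAdditive_withStepDensity (hH : ∀ j, H j ∈ A.sets) :
    IsAdditive A (P.withStepDensity a H) :=
  (IsAdditive.finset_sum _ fun j _ => P.isAdditive.inter_right (hH j)).const_mul a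

theorem withStepDensity_nonneg {a : ℝ} (ha : 0 ≤ a) (hH : ∀ j, H j ∈ A.sets) {E : Set Ω}
    (hE : E ∈ A.sets) : 0 ≤ P.withStepDensity a H E :=
  mul_nonneg ha (Finset.sum_nonneg fun j _ => P.nonneg _ (A.inter_mem hE (hH j)))

theorem withStepDensity_cons (H₀ : Set Ω) (H : Fin k → Set Ω) (E : Set Ω) :
    P.withStepDensity a (Fin.cons H₀ H) E = a * P.m (E ∩ H₀) + P.withStepDensity a H E := by
  simp only [withStepDensity, Fin.sum_univ_succ, Fin.cons_zero, Fin.cons_succ, mul_add]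

theorem abs_withStepDensity_sub_le {F : Fin k → Set Ω} (hH : ∀ j, H j ∈ A.sets)
    (hF : ∀ j, F j ∈ A.sets) {E : Set Ω} (hE : E ∈ A.sets) :
    |P.withStepDensity a H E - P.withStepDensity a F E| ≤ |a| * ∑ j, P.m (symmDiff (H j) (F j)) := by
  rw [withStepDensity, withStepDensity, ← mul_sub, abs_mul, ← Finset.sum_sub_distrib]
  exact mul_le_mul_of_nonneg_left ((Finset.abs_sum_le_sum_abs _ _).trans
    (Finset.sum_le_sum fun j _ => P.abs_sub_inter_le hE (hH j) (hF j))) (abs_nonneg a)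

end FA

theorem exists_exhaustion_step {P Q : FA A} {ν : Set Ω → ℝ} {η δ κ e : ℝ}
    (hδ : ∀ S ∈ A.sets, P.m S < δ → Q.m S < η / 4) (hκ : 0 < κ) (hκη : κ ≤ η / 4)
    (hν : IsAdditive A ν) (hν0 : ∀ S ∈ A.sets, 0 ≤ ν S) (hνQ : ∀ E ∈ A.sets, ν E ≤ Q.m E + e)
    {E₀ : Set Ω} (hE₀ : E₀ ∈ A.sets) (hgap : η < Q.m E₀ - ν E₀) :
    ∃ H ∈ A.sets, δ ≤ P.m H ∧ ∀ E ∈ A.sets, ν E + η / 4 * P.m (E ∩ H) ≤ Q.m E + (e + κ) := by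
  have hη : 0 < η := by linarith
  -- `H` nearly maximises `Q - ν - (η/2) P`, so on `H` the gap `Q - ν` exceeds `(η/2) P` up to `κ`
  obtain ⟨H, hH, hHmax, hHsub⟩ := IsAdditive.exists_approx_hahn
    (μ := fun S => Q.m S - ν S - η / 2 * P.m S) (M := 1)
    ((Q.isAdditive.sub hν).sub (P.isAdditive.const_mul (η / 2)))
    (fun S hS => by nlinarith [Q.le_one hS, hν0 S hS, P.nonneg S hS]) hκ
  have hQH : η / 4 < Q.m H := by
    have := hHmax E₀ hE₀
    nlinarith [P.le_one hE₀, hν0 H hH, P.nonneg H hH]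
  refine ⟨H, hH, not_lt.1 fun hlt => (hδ H hH hlt).not_gt hQH, fun E hE => ?_⟩
  have hEH := A.inter_mem hE hH
  have := hHsub _ hEH inter_subset_right
  linarith [hν.inter_add_diff hE hH, Q.isAdditive.inter_add_diff hE hH,
    hνQ _ (A.diff_mem hE hH), mul_nonneg hη.le (P.nonneg _ hEH)]

theorem exhaustion_stage {P Q : FA A} {η δ κ : ℝ}
    (hδ : ∀ S ∈ A.sets, P.m S < δ → Q.m S < η / 4) (hκ : 0 < κ) (hκη : κ ≤ η / 4) {K : ℕ}
    (hKκ : K * κ ≤ η) (k : ℕ) (hk : k ≤ K) :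
    (∃ (n : ℕ) (H : Fin n → Set Ω), (∀ j, H j ∈ A.sets) ∧
      ∀ E ∈ A.sets, |Q.m E - P.withStepDensity (η / 4) H E| ≤ η) ∨
    ∃ H : Fin k → Set Ω, (∀ j, H j ∈ A.sets) ∧
      (∀ E ∈ A.sets, P.withStepDensity (η / 4) H E ≤ Q.m E + k * κ) ∧
      k * (η / 4 * δ) ≤ P.withStepDensity (η / 4) H univ := by
  induction k with
  | zero =>
    exact Or.inr ⟨Fin.elim0, fun j => j.elim0,
      fun E hE => by simp [FA.withStepDensity, Q.nonneg E hE], by simp [FA.withStepDensity]⟩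
  | succ k ih =>
    obtain hgood | ⟨H, hHA, hνQ, hmass⟩ := ih (by omega)
    · exact Or.inl hgood
    by_cases hgood : ∀ E ∈ A.sets, |Q.m E - P.withStepDensity (η / 4) H E| ≤ η
    · exact Or.inl ⟨k, H, hHA, hgood⟩
    push Not at hgood
    obtain ⟨E₀, hE₀, hgap⟩ := hgood
    have hkκ : (k : ℝ) * κ ≤ η := le_trans (by gcongr; exact_mod_cast (by omega : k ≤ K)) hKκ
    have hgap' : η < Q.m E₀ - P.withStepDensity (η / 4) H E₀ := by
      rcases lt_abs.1 hgap with h | h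
      · exact h
      · linarith [hνQ E₀ hE₀]
    obtain ⟨H₀, hH₀, hPH₀, hstep⟩ := exists_exhaustion_step hδ hκ hκη
      (P.isAdditive_withStepDensity _ hHA)
      (fun S hS => P.withStepDensity_nonneg (by linarith) hHA hS) hνQ hE₀ hgap'
    refine Or.inr ⟨Fin.cons H₀ H, Fin.cases hH₀ hHA, fun E hE => ?_, ?_⟩
    · rw [FA.withStepDensity_cons]
      push_cast
      linarith [hstep E hE]
    · rw [FA.withStepDensity_cons, univ_inter]
      push_cast
      nlinarith

theorem AbsCont.exists_withStepDensity_approx {P Q : FA A} (hQ : AbsCont P Q) {η : ℝ}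
    (hη : 0 < η) : ∃ (k : ℕ) (H : Fin k → Set Ω), (∀ j, H j ∈ A.sets) ∧
      ∀ E ∈ A.sets, |Q.m E - P.withStepDensity (η / 4) H E| ≤ η := by
  obtain ⟨δ, hδ, hPQ⟩ := hQ.exists_pos (ε := η / 4) (by positivity)
  -- `K` stages, each adding mass `η δ / 4`, would exceed the total mass `1` plus errors
  obtain ⟨K, hK⟩ := exists_nat_gt ((1 + η) / (η / 4 * δ))
  rw [div_lt_iff₀ (by positivity)] at hK
  have hK0 : (0 : ℝ) ≤ K := K.cast_nonneg
  have hκ : 0 < η / (K + 4) := by positivity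
  have hκη : η / (K + 4) ≤ η / 4 := div_le_div_of_nonneg_left hη.le (by norm_num) (by linarith)
  have hKκ : K * (η / (K + 4)) ≤ η := by
    rw [mul_div_assoc', div_le_iff₀ (by positivity)]
    nlinarith
  refine (exhaustion_stage hPQ hκ hκη hKκ K le_rfl).resolve_right ?_
  rintro ⟨H, -, hνQ, hmass⟩
  linarith [hνQ univ A.univ_mem, Q.total]

end RadonNikodym

section Cylinder

variable {X : Type*} {ω ω' : ℕ → X} {s t : ℕ}

theorem mem_cyl_self (ω : ℕ → X) (t : ℕ) : ω ∈ cyl ω t := fun _ _ => rfl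

theorem cyl_eq_of_mem (h : ω' ∈ cyl ω t) : cyl ω' t = cyl ω t := by
  ext ω''
  exact ⟨fun h' i hi => (h' i hi).trans (h i hi), fun h' i hi => (h' i hi).trans (h i hi).symm⟩

theorem cyl_anti (ω : ℕ → X) (hst : s ≤ t) : cyl ω t ⊆ cyl ω s :=
  fun _ h i hi => h i (hi.trans_le hst)

variable [Finite X]

theorem finite_range_cyl (t : ℕ) : (range fun ω : ℕ → X => cyl ω t).Finite := by
  refine (finite_range fun v : Fin t → X => {ω' : ℕ → X | ∀ i : Fin t, ω' i = v i}).subset ?_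
  rintro _ ⟨ω, rfl⟩
  exact ⟨fun i => ω i, by ext ω'; simp [cyl, Fin.forall_iff]⟩

noncomputable def cylPartition (t : ℕ) : Finset (Set (ℕ → X)) :=
  (finite_range_cyl t).toFinset

theorem mem_cylPartition {C : Set (ℕ → X)} : C ∈ cylPartition t ↔ ∃ ω, cyl ω t = C := by
  simp [cylPartition]

theorem isFinPartition_cylPartition {A : SetAlgebra (ℕ → X)}
    (hcyl : ∀ ω t, cyl ω t ∈ A.sets) (t : ℕ) : IsFinPartition A (cylPartition t) where
  mem C hC := by
    obtain ⟨ω, rfl⟩ := mem_cylPartition.1 hC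
    exact hcyl ω t
  pairwiseDisjoint := by
    rintro _ hC _ hC' hne
    obtain ⟨ω, rfl⟩ := mem_cylPartition.1 hC
    obtain ⟨ω', rfl⟩ := mem_cylPartition.1 hC'
    exact disjoint_left.2 fun ω'' h h' => hne ((cyl_eq_of_mem h).symm.trans (cyl_eq_of_mem h'))
  exists_mem ω := ⟨cyl ω t, mem_cylPartition.2 ⟨ω, rfl⟩, mem_cyl_self ω t⟩

theorem IsCellUnion.cylPartition_mono {S : Set (ℕ → X)} (h : IsCellUnion (cylPartition s) S)
    (hst : s ≤ t) : IsCellUnion (cylPartition t) S := by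
  intro C hC
  obtain ⟨ω, rfl⟩ := mem_cylPartition.1 hC
  exact (h _ (mem_cylPartition.2 ⟨ω, rfl⟩)).imp (cyl_anti ω hst).trans
    (Disjoint.mono_left (cyl_anti ω hst))

open scoped Classical in
theorem setOf_cyl_eq_biUnion_s1 (p : Set (ℕ → X) → Prop) (t : ℕ) :
    {ω | p (cyl ω t)} = ⋃ C ∈ (cylPartition t).filter p, C := by
  ext ω
  simp only [mem_ofPred_eq, mem_iUnion, Finset.mem_filter, mem_cylPartition, exists_prop]
  constructor
  · exact fun h => ⟨cyl ω t, ⟨⟨ω, rfl⟩, h⟩, mem_cyl_self ω t⟩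
  · rintro ⟨_, ⟨⟨ω', rfl⟩, hp⟩, hω⟩
    rwa [cyl_eq_of_mem hω]

end Cylinder

theorem inCylAlg_univ : InCylAlg univ :=
  ⟨1, fun _ => (fun _ => false, 0), by ext; simp [cyl]⟩

namespace InCylAlg

variable {S : Set BinSeq} (h : InCylAlg S)
include h

theorem mem {A : SetAlgebra BinSeq} (hcyl : ∀ ω t, cyl ω t ∈ A.sets) : S ∈ A.sets := by
  obtain ⟨n, f, rfl⟩ := h
  simpa using A.biUnion_mem Finset.univ fun i _ => hcyl (f i).1 (f i).2

theorem eventually_isCellUnion : ∀ᶠ t in atTop, IsCellUnion (cylPartition t) S := by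
  obtain ⟨n, f, rfl⟩ := h
  refine eventually_atTop.2 ⟨Finset.univ.sup fun i => (f i).2, fun t ht C hC => ?_⟩
  obtain ⟨ω, rfl⟩ := mem_cylPartition.1 hC
  rw [or_iff_not_imp_right, not_disjoint_iff]
  rintro ⟨ω', hω't, hω'S⟩
  obtain ⟨i, hi⟩ := mem_iUnion.1 hω'S
  rw [← cyl_eq_of_mem hω't]
  exact (cyl_anti ω' ((Finset.le_sup (Finset.mem_univ i)).trans ht)).trans
    ((cyl_eq_of_mem hi).subset.trans (subset_iUnion (fun i => cyl (f i).1 (f i).2) i))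

end InCylAlg

section Density

variable {Ω : Type*} {A : SetAlgebra Ω}

namespace FA

/-- `P(C)` times the conditional covariance of `1_S` and `1_E` given `C`. -/
noncomputable def condCov (P : FA A) (E C S : Set Ω) : ℝ :=
  P.m (S ∩ (E ∩ C)) - P.cond E C * P.m (S ∩ C)

variable (P : FA A) {E C S : Set Ω} (hE : E ∈ A.sets) (hC : C ∈ A.sets)
include hE hC

theorem isAdditive_condCov : IsAdditive A (P.condCov E C) :=
  (P.isAdditive.inter_right (A.inter_mem hE hC)).sub
    ((P.isAdditive.inter_right hC).const_mul (P.cond E C))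

theorem abs_condCov_le (hS : S ∈ A.sets) : |P.condCov E C S| ≤ P.m (S ∩ C) := by
  have hSC := A.inter_mem hS hC
  have h₁ := P.mono (A.inter_mem hS (A.inter_mem hE hC)) hSC
    (inter_subset_inter_right S inter_subset_right)
  have h₂ := mul_le_of_le_one_left (P.nonneg _ hSC) (P.cond_le_one hE hC)
  rw [condCov, abs_le]
  constructor <;> nlinarith [P.nonneg _ (A.inter_mem hS (A.inter_mem hE hC)),
    P.cond_nonneg hE hC, P.nonneg _ hSC]

theorem condCov_eq_zero_of_subset (hCS : C ⊆ S) : P.condCov E C S = 0 := by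
  rw [condCov, inter_eq_self_of_subset_right (inter_subset_right.trans hCS),
    inter_eq_self_of_subset_right hCS, P.cond_mul hE hC, sub_self]

omit hE hC in
theorem condCov_eq_zero_of_disjoint (hCS : Disjoint C S) : P.condCov E C S = 0 := by
  rw [condCov, (hCS.symm.mono_right inter_subset_right).inter_eq, hCS.symm.inter_eq,
    P.isAdditive.empty, mul_zero, sub_self]

theorem min_le_two_mul_condCov : min (P.m (C \ E)) (P.m (E ∩ C)) ≤ 2 * P.condCov E C E := by
  have hEC := A.inter_mem hE hC
  rw [condCov, ← inter_assoc, inter_self, ← sdiff_inter_self_eq_sdiff,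
    P.isAdditive.diff hC hEC inter_subset_right, ← P.cond_mul hE hC]
  have h0 := P.cond_nonneg hE hC
  have h1 := P.cond_le_one hE hC
  have hp := P.nonneg C hC
  rcases le_total (P.cond E C) (1 / 2) with h | h
  · exact (min_le_right _ _).trans (by nlinarith [mul_nonneg h0 hp, mul_nonneg (sub_nonneg.2 h) hp])
  · exact (min_le_left _ _).trans (by nlinarith [mul_nonneg (sub_nonneg.2 h1) hp])

end FA

namespace IsFinPartition

variable {𝒟 : Finset (Set Ω)} (h𝒟 : IsFinPartition A 𝒟) (P : FA A) {E : Set Ω} (hE : E ∈ A.sets)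
include h𝒟 hE

theorem abs_sum_condCov_le {S : Set Ω} (hS : S ∈ A.sets) :
    |∑ C ∈ 𝒟, P.condCov E C S| ≤ P.m S :=
  (Finset.abs_sum_le_sum_abs _ _).trans <| (h𝒟.sum_inter P.isAdditive hS) ▸
    Finset.sum_le_sum fun C hC => P.abs_condCov_le hE (h𝒟.mem C hC) hS

theorem sum_condCov_eq_zero {S : Set Ω} (hS : IsCellUnion 𝒟 S) :
    ∑ C ∈ 𝒟, P.condCov E C S = 0 :=
  Finset.sum_eq_zero fun C hC => (hS C hC).elim (P.condCov_eq_zero_of_subset hE (h𝒟.mem C hC))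
    (P.condCov_eq_zero_of_disjoint)

theorem exists_symmDiff_le :
    ∃ 𝒟' ⊆ 𝒟, P.m (symmDiff E (⋃ C ∈ 𝒟', C)) ≤ 2 * ∑ C ∈ 𝒟, P.condCov E C E := by
  classical
  set 𝒟' := 𝒟.filter fun C => P.m (C \ E) < P.m (E ∩ C)
  have h𝒟' : 𝒟' ⊆ 𝒟 := Finset.filter_subset _ _
  set F := ⋃ C ∈ 𝒟', C
  have hF : F ∈ A.sets := A.biUnion_mem _ fun C hC => h𝒟.mem C (h𝒟' hC)
  refine ⟨𝒟', h𝒟', ?_⟩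
  rw [← h𝒟.sum_inter P.isAdditive (A.symmDiff_mem hE hF), Finset.mul_sum]
  refine Finset.sum_le_sum fun C hC => le_trans ?_ (P.min_le_two_mul_condCov hE (h𝒟.mem C hC))
  by_cases hC' : C ∈ 𝒟'
  · have hCF : C ⊆ F := subset_biUnion_of_mem (u := id) hC'
    have : symmDiff E F ∩ C = C \ E := by
      ext ω
      simp only [mem_inter_iff, mem_symmDiff, Set.mem_sdiff]
      exact ⟨fun h => ⟨h.2, fun hωE => h.1.elim (fun h' => h'.2 (hCF h.2)) (fun h' => h'.2 hωE)⟩,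
        fun h => ⟨Or.inr ⟨hCF h.1, h.2⟩, h.1⟩⟩
    rw [this, min_eq_left (Finset.mem_filter.1 hC').2.le]
  · have hCF := disjoint_biUnion_of_notMem h𝒟.pairwiseDisjoint h𝒟' hC hC'
    have : symmDiff E F ∩ C = E ∩ C := by
      ext ω
      simp only [mem_inter_iff, mem_symmDiff]
      exact ⟨fun h => ⟨h.1.elim And.left (fun h' => (disjoint_left.1 hCF h.2 h'.1).elim), h.2⟩,
        fun h => ⟨Or.inl ⟨h.1, disjoint_left.1 hCF h.2⟩, h.2⟩⟩
    rw [this, min_eq_right (not_lt.1 fun h => hC' (Finset.mem_filter.2 ⟨hC, h⟩))]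

end IsFinPartition

theorem exists_isAdditive_tendsto {ι : Type*} (𝒰 : Ultrafilter ι) (P : FA A)
    {b : ι → Set Ω → ℝ} (hb : ∀ i, IsAdditive A (b i)) (hbP : ∀ i, ∀ S ∈ A.sets, |b i S| ≤ P.m S) :
    ∃ ℓ : Set Ω → ℝ, IsAdditive A ℓ ∧ (∀ S ∈ A.sets, |ℓ S| ≤ P.m S) ∧
      ∀ S ∈ A.sets, Tendsto (fun i => b i S) 𝒰 (𝓝 (ℓ S)) := by
  have hlim : ∀ S ∈ A.sets,
      Tendsto (fun i => b i S) 𝒰 (𝓝 (limUnder (𝒰 : Filter ι) fun i => b i S)) := by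
    intro S hS
    refine tendsto_nhds_limUnder ?_
    obtain ⟨x, -, hx⟩ := isCompact_Icc.ultrafilter_le_nhds (𝒰.map fun i => b i S)
      (le_principal_iff.2 (Ultrafilter.mem_map.2 (univ_mem' fun i => abs_le.1 (hbP i S hS))))
    exact ⟨x, hx⟩
  refine ⟨fun S => limUnder (𝒰 : Filter ι) fun i => b i S, fun S hS T hT hST => ?_,
    fun S hS => le_of_tendsto' (hlim S hS).abs (hbP · S hS), hlim⟩
  exact tendsto_nhds_unique (hlim _ (A.union_mem S hS T hT))
    (((hlim S hS).add (hlim T hT)).congr fun i => (hb i S hS T hT hST).symm)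

end Density

namespace ExtremePoint

variable {A : SetAlgebra BinSeq} {P : FA A} (hext : ExtremePoint P)
include hext

theorem eq_zero_of_abs_le {ℓ : Set BinSeq → ℝ} (hℓ : IsAdditive A ℓ)
    (hℓP : ∀ S ∈ A.sets, |ℓ S| ≤ P.m S) (hℓF : ∀ S, InCylAlg S → ℓ S = 0) {S : Set BinSeq}
    (hS : S ∈ A.sets) : ℓ S = 0 := by
  have huniv := hℓF univ inCylAlg_univ
  let Q := P.perturb ℓ hℓ (fun S hS => (abs_le.1 (hℓP S hS)).1) huniv
  let R := P.perturb (-ℓ) hℓ.neg (fun S hS => by simp only [Pi.neg_apply]; linarith [(abs_le.1 (hℓP S hS)).2])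
    (by simp [huniv])
  have := hext Q R (fun S hS => by simp [Q, FA.perturb, hℓF S hS])
    (fun S hS => by simp [R, FA.perturb, hℓF S hS]) (1 / 2) (by norm_num) (by norm_num)
    (fun S _ => by simp only [Q, R, FA.perturb, Pi.neg_apply]; ring) S hS
  simp only [Q, R, FA.perturb, Pi.neg_apply] at this
  linarith

theorem exists_isCellUnion_symmDiff_lt (hcyl : ∀ ω t, cyl ω t ∈ A.sets) {E : Set BinSeq}
    (hE : E ∈ A.sets) {η : ℝ} (hη : 0 < η) :
    ∃ t, ∃ F ∈ A.sets, IsCellUnion (cylPartition t) F ∧ P.m (symmDiff E F) < η := by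
  have h𝒟 := isFinPartition_cylPartition hcyl
  obtain ⟨ℓ, hℓ, hℓP, hlim⟩ := exists_isAdditive_tendsto (hyperfilter ℕ) P
    (b := fun t S => ∑ C ∈ cylPartition t, P.condCov E C S)
    (fun t => IsAdditive.finset_sum _ fun C hC => P.isAdditive_condCov hE ((h𝒟 t).mem C hC))
    (fun t S hS => (h𝒟 t).abs_sum_condCov_le P hE hS)
  have hℓE : ℓ E = 0 := hext.eq_zero_of_abs_le hℓ hℓP (fun S hS => tendsto_nhds_unique
    (hlim S (hS.mem hcyl)) (tendsto_const_nhds.congr' ((hS.eventually_isCellUnion.filter_mono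
      Nat.hyperfilter_le_atTop).mono fun t ht => ((h𝒟 t).sum_condCov_eq_zero P hE ht).symm))) hE
  obtain ⟨t, ht⟩ := ((hlim E hE).eventually (gt_mem_nhds (hℓE ▸ half_pos hη))).exists
  obtain ⟨𝒟', h𝒟', hle⟩ := (h𝒟 t).exists_symmDiff_le P hE
  exact ⟨t, ⋃ C ∈ 𝒟', C, A.biUnion_mem _ fun C hC => (h𝒟 t).mem C (h𝒟' hC),
    isCellUnion_biUnion (h𝒟 t).pairwiseDisjoint h𝒟', by linarith⟩

end ExtremePoint

theorem ExtremePoint.exists_approx_isProportionalOn {A : SetAlgebra BinSeq} {P Q : FA A}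
    (hext : ExtremePoint P) (hcyl : ∀ ω t, cyl ω t ∈ A.sets) (hQ : AbsCont P Q) {η : ℝ}
    (hη : 0 < η) : ∃ (ν : Set BinSeq → ℝ) (s : ℕ), IsAdditive A ν ∧
      (∀ E ∈ A.sets, |Q.m E - ν E| ≤ η) ∧ ∀ t ≥ s, ∀ C ∈ cylPartition t, IsProportionalOn P ν C := by
  obtain ⟨k, H, hHA, hQH⟩ := hQ.exists_withStepDensity_approx (half_pos hη)
  choose t F hFA hFcell hHF using fun j =>
    hext.exists_isCellUnion_symmDiff_lt hcyl (hHA j) (Nat.one_div_pos_of_nat (n := k))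
  refine ⟨P.withStepDensity (η / 2 / 4) F, Finset.univ.sup t,
    P.isAdditive_withStepDensity _ hFA, fun E hE => ?_, fun s hs C hC => ?_⟩
  · have hsum : ∑ j, P.m (symmDiff (H j) (F j)) ≤ 1 := by
      refine (Finset.sum_le_sum fun j _ => (hHF j).le).trans ?_
      rw [Finset.sum_const, Finset.card_univ, Fintype.card_fin, nsmul_eq_mul, mul_one_div,
        div_le_one (by positivity)]
      linarith
    have hF := P.abs_withStepDensity_sub_le (η / 2 / 4) hHA hFA hE
    rw [abs_of_pos (show (0 : ℝ) < η / 2 / 4 by positivity)] at hF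
    calc |Q.m E - P.withStepDensity (η / 2 / 4) F E|
        ≤ |Q.m E - P.withStepDensity (η / 2 / 4) H E|
          + |P.withStepDensity (η / 2 / 4) H E - P.withStepDensity (η / 2 / 4) F E| :=
          abs_sub_le _ _ _
      _ ≤ η / 2 + η / 2 / 4 * 1 := add_le_add (hQH E hE) (hF.trans (by gcongr))
      _ ≤ η := by linarith
  · exact (IsProportionalOn.finset_sum _ fun j _ => IsProportionalOn.inter_of_isCellUnion
      ((hFcell j).cylPartition_mono ((Finset.le_sup (Finset.mem_univ j)).trans hs)) hC).const_mul _

theorem extremePoint_implies_blackwellDubins_general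
    (A : SetAlgebra BinSeq)
    (hcyl : ∀ (ω : BinSeq) (t : ℕ), cyl ω t ∈ A.sets)
    (P : FA A) (hext : ExtremePoint P) : BDProp P := by
  classical
  intro Q hQ ε hε
  change Tendsto (fun t => Q.m {ω | Disagree P Q ε (cyl ω t)}) atTop (𝓝 0)
  simp only [setOf_cyl_eq_biUnion_s1]
  have h𝒟 := isFinPartition_cylPartition hcyl
  refine tendsto_order.2 ⟨fun a ha => Eventually.of_forall fun t => ha.trans_le (Q.nonneg _
    (A.biUnion_mem _ fun C hC => (h𝒟 t).mem C (Finset.mem_of_mem_filter C hC))), fun b hb => ?_⟩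
  obtain ⟨ν, s, hν, hQν, hprop⟩ :=
    hext.exists_approx_isProportionalOn hcyl hQ (η := ε * b / 6) (by positivity)
  filter_upwards [eventually_ge_atTop s] with t ht
  have := mul_m_biUnion_disagree_le hν hQν (h𝒟 t).mem (h𝒟 t).pairwiseDisjoint (hprop t ht) hε.le
  exact (le_of_mul_le_mul_left (by linarith) hε).trans_lt (half_lt_self hb)

/-- Theorem 8, (1) ⟹ (2): if `P` is an extreme point of the set of
extensions of its restriction to the cylinder algebra, then `P` satisfies the
Blackwell–Dubins property. -/
theorem extremePoint_implies_blackwellDubins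
    (A : SetAlgebra BinSeq) (hσ : A.IsSigmaAlgebra)
    (hcyl : ∀ (ω : BinSeq) (t : ℕ), cyl ω t ∈ A.sets)
    (P : FA A) (hext : ExtremePoint P) : BDProp P :=
  extremePoint_implies_blackwellDubins_general A hcyl P hext
end

section
/- Let A be a σ-algebra on a set Ω and P a finitely additive probability on (Ω, A). Then P is strongly continuous (for every ε > 0 there exists a finite A-measurable partition {A_1, …, A_n} of Ω with P(A_i) < ε for all i) if and only if P is strongly nonatomic (for every A-measurable E and every α ∈ [0,1] there exists an A-measurable F ⊆ E with P(F) = αP(E)). -/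
open Filter Topology


/-- `P` is strongly continuous: for every `ε > 0` there is a finite measurable partition
of `Ω` into sets of probability less than `ε`. -/
def StronglyContinuous {Ω : Type*} {A : SetAlgebra Ω} (P : FA A) : Prop :=
  ∀ ε : ℝ, 0 < ε → ∃ (n : ℕ) (f : Fin n → Set Ω),
    (∀ i, f i ∈ A.sets) ∧ (⋃ i, f i) = Set.univ ∧
    (∀ i j, i ≠ j → Disjoint (f i) (f j)) ∧ (∀ i, P.m (f i) < ε)

section AuxLemmas

variable {Ω : Type*} {A : SetAlgebra Ω}

lemma SetAlgebra.empty_mem' (A : SetAlgebra Ω) : (∅ : Set Ω) ∈ A.sets := by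
  have h := A.compl_mem _ A.univ_mem
  simpa using h

lemma SetAlgebra.inter_mem' (A : SetAlgebra Ω) {S T : Set Ω} (hS : S ∈ A.sets)
    (hT : T ∈ A.sets) : S ∩ T ∈ A.sets := by
  have h := A.compl_mem _ (A.union_mem _ (A.compl_mem _ hS) _ (A.compl_mem _ hT))
  simpa [Set.compl_union] using h

lemma SetAlgebra.diff_mem' (A : SetAlgebra Ω) {S T : Set Ω} (hS : S ∈ A.sets)
    (hT : T ∈ A.sets) : S \ T ∈ A.sets := by
  rw [Set.diff_eq]; exact A.inter_mem' hS (A.compl_mem _ hT)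

lemma FA.m_empty' (P : FA A) : P.m ∅ = 0 := by
  have h := P.add _ A.univ_mem _ A.empty_mem' (by simp)
  simp only [Set.union_empty] at h
  linarith

lemma FA.m_diff' (P : FA A) {S T : Set Ω} (hS : S ∈ A.sets) (hT : T ∈ A.sets)
    (h : S ⊆ T) : P.m T = P.m S + P.m (T \ S) := by
  have h2 := P.add _ hS _ (A.diff_mem' hT hS) Set.disjoint_sdiff_right
  rwa [Set.union_diff_cancel h] at h2

lemma FA.mono' (P : FA A) {S T : Set Ω} (hS : S ∈ A.sets) (hT : T ∈ A.sets)
    (h : S ⊆ T) : P.m S ≤ P.m T := by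
  have h2 := P.m_diff' hS hT h
  have h3 := P.nonneg _ (A.diff_mem' hT hS)
  linarith

/-- The refinement step: squeeze the interval `[P A0, P B0]` around `t` to width `≤ ε`. -/
lemma step_lemma (P : FA A) (hsc : StronglyContinuous P)
    {A0 B0 : Set Ω} (hA : A0 ∈ A.sets) (hB : B0 ∈ A.sets) (hAB : A0 ⊆ B0)
    {t ε : ℝ} (hε : 0 < ε) (h1 : P.m A0 ≤ t) (h2 : t ≤ P.m B0) :
    ∃ A1 B1, A1 ∈ A.sets ∧ B1 ∈ A.sets ∧ A0 ⊆ A1 ∧ A1 ⊆ B1 ∧ B1 ⊆ B0 ∧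
      P.m A1 ≤ t ∧ t ≤ P.m B1 ∧ P.m B1 - P.m A1 ≤ ε := by
  classical
  obtain ⟨n, f, hfmem, hfuniv, hfdisj, hfsmall⟩ := hsc ε hε
  set C := B0 \ A0 with hC
  have hCmem : C ∈ A.sets := A.diff_mem' hB hA
  set D : ℕ → Set Ω := fun i => if h : i < n then C ∩ f ⟨i, h⟩ else ∅ with hD
  have hDmem : ∀ i, D i ∈ A.sets := by
    intro i; simp only [hD]
    split
    · exact A.inter_mem' hCmem (hfmem _)
    · exact A.empty_mem'
  have hDsub : ∀ i, D i ⊆ C := by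
    intro i; simp only [hD]
    split
    · exact Set.inter_subset_left
    · exact Set.empty_subset _
  have hDdisj : ∀ i j, i ≠ j → Disjoint (D i) (D j) := by
    intro i j hij
    simp only [hD]
    split
    · split
      · refine Disjoint.mono Set.inter_subset_right Set.inter_subset_right ?_
        exact hfdisj _ _ (by simpa using hij)
      · simp
    · simp
  have hDsmall : ∀ i, P.m (D i) < ε := by
    intro i; simp only [hD]
    split
    · exact lt_of_le_of_lt (P.mono' (A.inter_mem' hCmem (hfmem _)) (hfmem _)
        Set.inter_subset_right) (hfsmall _)
    · rw [P.m_empty']; exact hε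
  set g : ℕ → Set Ω := fun k => Nat.rec A0 (fun i S => S ∪ D i) k with hg
  have hg0 : g 0 = A0 := rfl
  have hgs : ∀ k, g (k + 1) = g k ∪ D k := fun _ => rfl
  have hgmem : ∀ k, g k ∈ A.sets := by
    intro k; induction k with
    | zero => exact hA
    | succ k ih => rw [hgs]; exact A.union_mem _ ih _ (hDmem k)
  have hgA0 : ∀ k, A0 ⊆ g k := by
    intro k; induction k with
    | zero => exact subset_rfl
    | succ k ih => rw [hgs]; exact ih.trans Set.subset_union_left
  have hgB0 : ∀ k, g k ⊆ B0 := by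
    intro k; induction k with
    | zero => exact hAB
    | succ k ih =>
      rw [hgs]
      exact Set.union_subset ih ((hDsub k).trans Set.diff_subset)
  have hgdisj : ∀ k j, k ≤ j → Disjoint (g k) (D j) := by
    intro k
    induction k with
    | zero =>
      intro j _
      exact Set.disjoint_sdiff_right.mono_right (hDsub j)
    | succ k ih =>
      intro j hj
      rw [hgs, Set.disjoint_union_left]
      exact ⟨ih j (Nat.le_of_succ_le hj), hDdisj _ _ (by omega)⟩
  have hgm : ∀ k, P.m (g (k + 1)) = P.m (g k) + P.m (D k) := by
    intro k
    rw [hgs]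
    exact P.add _ (hgmem k) _ (hDmem k) (hgdisj k k le_rfl)
  have hDg : ∀ k j, j < k → D j ⊆ g k := by
    intro k
    induction k with
    | zero => intro j hj; omega
    | succ k ih =>
      intro j hj
      rcases Nat.lt_succ_iff_lt_or_eq.mp hj with h | h
      · exact (ih j h).trans (by rw [hgs]; exact Set.subset_union_left)
      · subst h; rw [hgs]; exact Set.subset_union_right
  have hgn : g n = B0 := by
    apply subset_antisymm (hgB0 n)
    intro x hx
    by_cases hxA : x ∈ A0
    · exact hgA0 n hxA
    · have hxC : x ∈ C := ⟨hx, hxA⟩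
      have : x ∈ ⋃ i, f i := by rw [hfuniv]; trivial
      obtain ⟨i, hi⟩ := Set.mem_iUnion.mp this
      have hxD : x ∈ D i.val := by
        simp only [hD, i.isLt, dif_pos]
        exact ⟨hxC, by simpa using hi⟩
      exact hDg n i.val i.isLt hxD
  set Q : ℕ → Prop := fun k => P.m (g k) ≤ t with hQ
  set k := Nat.findGreatest Q n with hk
  have hkQ : Q k := Nat.findGreatest_spec (Nat.zero_le n) (show Q 0 from h1)
  have hkn : k ≤ n := Nat.findGreatest_le n
  by_cases hkeq : P.m (g n) ≤ t
  · refine ⟨B0, B0, hB, hB, hAB, subset_rfl, subset_rfl, ?_, h2, by linarith⟩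
    rwa [hgn] at hkeq
  · have hken : k ≠ n := by
      intro h; rw [hQ] at hkQ; rw [h] at hkQ; exact hkeq hkQ
    have hklt : k < n := lt_of_le_of_ne hkn hken
    have hnot : ¬ Q (k + 1) :=
      Nat.findGreatest_is_greatest (Nat.lt_succ_self k) hklt
    refine ⟨g k, g (k + 1), hgmem k, hgmem (k + 1), hgA0 k, ?_, hgB0 (k + 1), hkQ,
      le_of_lt (not_le.mp hnot), ?_⟩
    · rw [hgs]; exact Set.subset_union_left
    · rw [hgm k]
      have := hDsmall k
      linarith

/-- On a σ-algebra, a strongly continuous finitely additive probability attains every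
value `t ∈ [0, P E]` on a measurable subset of `E`. -/
lemma exists_subset_m_eq (hσ : A.IsSigmaAlgebra) (P : FA A) (hsc : StronglyContinuous P)
    {E : Set Ω} (hE : E ∈ A.sets) {t : ℝ} (ht0 : 0 ≤ t) (htE : t ≤ P.m E) :
    ∃ F ∈ A.sets, F ⊆ E ∧ P.m F = t := by
  classical
  set Inv : Set Ω × Set Ω → Prop := fun p =>
    p.1 ∈ A.sets ∧ p.2 ∈ A.sets ∧ p.1 ⊆ p.2 ∧ p.2 ⊆ E ∧ P.m p.1 ≤ t ∧ t ≤ P.m p.2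
    with hInvdef
  have hstep : ∀ (n : ℕ) (p : Set Ω × Set Ω), ∃ q : Set Ω × Set Ω,
      Inv p → Inv q ∧ p.1 ⊆ q.1 ∧ q.2 ⊆ p.2 ∧ P.m q.2 - P.m q.1 ≤ 1 / (n + 1) := by
    intro n p
    by_cases hp : Inv p
    · obtain ⟨hp1, hp2, hp12, hp2E, hpt1, hpt2⟩ := hp
      obtain ⟨A1, B1, hA1, hB1, hs1, hs2, hs3, hm1, hm2, hm3⟩ :=
        step_lemma P hsc hp1 hp2 hp12 (by positivity : (0:ℝ) < 1 / (n + 1)) hpt1 hpt2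
      exact ⟨(A1, B1), fun _ =>
        ⟨⟨hA1, hB1, hs2, hs3.trans hp2E, hm1, hm2⟩, hs1, hs3, hm3⟩⟩
    · exact ⟨p, fun h => absurd h hp⟩
  choose stepf hstepf using hstep
  set seq : ℕ → Set Ω × Set Ω := fun n => Nat.rec (∅, E) (fun n p => stepf n p) n with hseq
  have hseqs : ∀ n, seq (n + 1) = stepf n (seq n) := fun _ => rfl
  have hInv0 : Inv (∅, E) := by
    refine ⟨A.empty_mem', hE, Set.empty_subset _, subset_rfl, ?_, htE⟩
    rw [P.m_empty']; exact ht0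
  have hInv : ∀ n, Inv (seq n) := by
    intro n; induction n with
    | zero => exact hInv0
    | succ n ih => rw [hseqs]; exact (hstepf n (seq n) ih).1
  have hclose : ∀ n : ℕ, P.m (seq (n + 1)).2 - P.m (seq (n + 1)).1 ≤ 1 / (n + 1) := by
    intro n; rw [hseqs]; exact (hstepf n (seq n) (hInv n)).2.2.2
  have hmono1 : ∀ n, (seq n).1 ⊆ (seq (n + 1)).1 := by
    intro n; rw [hseqs]; exact (hstepf n (seq n) (hInv n)).2.1
  have hmono2 : ∀ n, (seq (n + 1)).2 ⊆ (seq n).2 := by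
    intro n; rw [hseqs]; exact (hstepf n (seq n) (hInv n)).2.2.1
  have hincr : ∀ n, ∀ m ≤ n, (seq m).1 ⊆ (seq n).1 := by
    intro n
    induction n with
    | zero => intro m hm; rw [Nat.le_zero.mp hm]
    | succ n ih =>
      intro m hm
      rcases hm.lt_or_eq with h | h
      · exact (ih m (Nat.lt_succ_iff.mp h)).trans (hmono1 n)
      · rw [h]
  have hdecr : ∀ n, ∀ m ≤ n, (seq n).2 ⊆ (seq m).2 := by
    intro n
    induction n with
    | zero => intro m hm; rw [Nat.le_zero.mp hm]
    | succ n ih =>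
      intro m hm
      rcases hm.lt_or_eq with h | h
      · exact (hmono2 n).trans (ih m (Nat.lt_succ_iff.mp h))
      · rw [h]
  have hcross : ∀ m n, (seq m).1 ⊆ (seq n).2 := by
    intro m n
    rcases le_total m n with h | h
    · exact (hincr n m h).trans (hInv n).2.2.1
    · exact (hInv m).2.2.1.trans (hdecr m n h)
  set F : Set Ω := ⋃ n, (seq n).1 with hF
  have hFmem : F ∈ A.sets := hσ _ (fun n => (hInv n).1)
  have hFsub : F ⊆ E := Set.iUnion_subset fun n => ((hInv n).2.2.1).trans (hInv n).2.2.2.1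
  have hFle : ∀ n, P.m F ≤ P.m (seq n).2 := fun n =>
    P.mono' hFmem (hInv n).2.1 (Set.iUnion_subset fun m => hcross m n)
  have hFge : ∀ n, P.m (seq n).1 ≤ P.m F := fun n =>
    P.mono' (hInv n).1 hFmem (Set.subset_iUnion (fun n => (seq n).1) n)
  refine ⟨F, hFmem, hFsub, ?_⟩
  have key : ∀ n : ℕ, |P.m F - t| ≤ 1 / (n + 1) := by
    intro n
    have h1 := hFge (n + 1)
    have h2 := hFle (n + 1)
    have h3 := hclose n
    have h4 := (hInv (n + 1)).2.2.2.2.1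
    have h5 := (hInv (n + 1)).2.2.2.2.2
    rw [abs_le]
    constructor <;> linarith
  by_contra hne
  have habs : 0 < |P.m F - t| := abs_pos.mpr (sub_ne_zero.mpr hne)
  obtain ⟨n, hn⟩ := exists_nat_one_div_lt habs
  exact absurd (key n) (not_le.mpr (by exact_mod_cast hn))

/-- Halving an event under strong nonatomicity. -/
lemma halve_lemma (P : FA A) (hna : StronglyNonatomic P) {E : Set Ω} (hE : E ∈ A.sets) :
    ∃ F G, F ∈ A.sets ∧ G ∈ A.sets ∧ Disjoint F G ∧ F ∪ G = E ∧
      P.m F = P.m E / 2 ∧ P.m G = P.m E / 2 := by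
  obtain ⟨F, hF, hFE, hFm⟩ := hna E hE (1 / 2) (by norm_num) (by norm_num)
  have hdiff := P.m_diff' hF hE hFE
  exact ⟨F, E \ F, hF, A.diff_mem' hE hF, Set.disjoint_sdiff_right,
    Set.union_diff_cancel hFE, by linarith, by linarith⟩

/-- Dyadic partitions exist under strong nonatomicity. -/
lemma dyadic_partition (P : FA A) (hna : StronglyNonatomic P) (n : ℕ) :
    ∃ f : (Fin n → Bool) → Set Ω,
      (∀ s, f s ∈ A.sets) ∧ (⋃ s, f s) = Set.univ ∧
      (∀ s u, s ≠ u → Disjoint (f s) (f u)) ∧ (∀ s, P.m (f s) = (1 / 2) ^ n) := by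
  classical
  induction n with
  | zero =>
    refine ⟨fun _ => Set.univ, fun _ => A.univ_mem, ?_, ?_, fun _ => by simp [P.total]⟩
    · exact Set.iUnion_eq_univ_iff.mpr fun x => ⟨default, trivial⟩
    · intro s u h; exact absurd (Subsingleton.elim s u) h
  | succ n ih =>
    obtain ⟨f, hmem, huniv, hdisj, hm⟩ := ih
    choose F G hF hG hFG hUnion hmF hmG using fun s => halve_lemma P hna (hmem s)
    refine ⟨fun s => if s (Fin.last n) then F (s ∘ Fin.castSucc) else G (s ∘ Fin.castSucc),
      ?_, ?_, ?_, ?_⟩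
    · intro s
      dsimp only
      split
      · exact hF _
      · exact hG _
    · apply Set.eq_univ_of_univ_subset
      intro x _
      have : x ∈ ⋃ s, f s := by rw [huniv]; trivial
      obtain ⟨s, hs⟩ := Set.mem_iUnion.mp this
      rw [← hUnion s] at hs
      rcases hs with hs | hs
      · refine Set.mem_iUnion.mpr ⟨Fin.snoc s true, ?_⟩
        have h1 : (Fin.snoc s true : Fin (n+1) → Bool) (Fin.last n) = true := Fin.snoc_last _ _
        have h2 : (Fin.snoc s true : Fin (n+1) → Bool) ∘ Fin.castSucc = s := by
          funext i; exact Fin.snoc_castSucc _ _ _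
        simp only [h1, if_true, h2]
        exact hs
      · refine Set.mem_iUnion.mpr ⟨Fin.snoc s false, ?_⟩
        have h1 : (Fin.snoc s false : Fin (n+1) → Bool) (Fin.last n) = false := Fin.snoc_last _ _
        have h2 : (Fin.snoc s false : Fin (n+1) → Bool) ∘ Fin.castSucc = s := by
          funext i; exact Fin.snoc_castSucc _ _ _
        simp only [h1, Bool.false_eq_true, if_false, h2]
        exact hs
    · intro s u hsu
      have hFsub : ∀ r, F r ⊆ f r := fun r => (hUnion r) ▸ Set.subset_union_left
      have hGsub : ∀ r, G r ⊆ f r := fun r => (hUnion r) ▸ Set.subset_union_right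
      by_cases hrest : s ∘ Fin.castSucc = u ∘ Fin.castSucc
      · have hlast : s (Fin.last n) ≠ u (Fin.last n) := by
          intro h
          apply hsu
          funext i
          induction i using Fin.lastCases with
          | last => exact h
          | cast j => exact congrFun hrest j
        rcases Bool.eq_false_or_eq_true (s (Fin.last n)) with h1 | h1 <;>
          rcases Bool.eq_false_or_eq_true (u (Fin.last n)) with h2 | h2
        · exact absurd (h1.trans h2.symm) hlast
        · simp only [h1, h2, Bool.false_eq_true, if_false, if_true, hrest]
          exact hFG _
        · simp only [h1, h2, Bool.false_eq_true, if_false, if_true, hrest]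
          exact (hFG _).symm
        · exact absurd (h1.trans h2.symm) hlast
      · have hd := hdisj _ _ hrest
        refine Disjoint.mono ?_ ?_ hd
        · dsimp only
          split
          · exact hFsub _
          · exact hGsub _
        · dsimp only
          split
          · exact hFsub _
          · exact hGsub _
    · intro s
      have hpow : ((1:ℝ) / 2) ^ (n + 1) = (1 / 2) ^ n / 2 := by
        rw [pow_succ]; ring
      dsimp only
      split
      · rw [hmF, hm, hpow]
      · rw [hmG, hm, hpow]

end AuxLemmas

/-- Theorem 13, Bhaskara Rao–Bhaskara Rao: on a σ-algebra, a finitely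
additive probability is strongly continuous iff it is strongly nonatomic. -/
theorem stronglyContinuous_iff_stronglyNonatomic {Ω : Type*}
    (A : SetAlgebra Ω) (hσ : A.IsSigmaAlgebra) (P : FA A) :
    StronglyContinuous P ↔ StronglyNonatomic P := by
  constructor
  · intro hsc E hE α hα0 hα1
    have hPE : 0 ≤ P.m E := P.nonneg E hE
    have ht0 : 0 ≤ α * P.m E := mul_nonneg hα0 hPE
    have htE : α * P.m E ≤ P.m E := by nlinarith
    obtain ⟨F, hF, hFE, hFm⟩ := exists_subset_m_eq hσ P hsc hE ht0 htE
    exact ⟨F, hF, hFE, hFm⟩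
  · intro hna ε hε
    obtain ⟨n, hn⟩ := exists_pow_lt_of_lt_one hε (by norm_num : (1:ℝ)/2 < 1)
    obtain ⟨f, hmem, huniv, hdisj, hm⟩ := dyadic_partition P hna n
    let e := (Fintype.equivFin (Fin n → Bool)).symm
    refine ⟨Fintype.card (Fin n → Bool), fun i => f (e i), fun i => hmem _, ?_, ?_, ?_⟩
    · rw [← huniv]
      exact e.surjective.iUnion_comp f
    · intro i j hij
      exact hdisj _ _ (fun h => hij (e.injective h))
    · intro i
      rw [hm]
      exact hn
end

section
/- Let Ω = {0,1}^∞, F the algebra generated by cylinders, Σ ⊇ F a σ-algebra, and I a strictly proper ideal. Let π be a finitely additive probability on (Ω, F). Then the set function π̃ on the algebra A = {(F ∩ L) ∪ S : F ∈ F, S ∈ I ∩ Σ, L^c ∈ I ∩ Σ} defined by π̃((F ∩ L) ∪ S) = π(F) is well-defined and finitely additive, and satisfies π̃(S) = 0 for every S ∈ I ∩ Σ. -/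
open Filter Topology


/-- A strictly proper ideal of subsets of `{0,1}^∞`: a nonempty collection of "small"
sets closed under subsets and finite unions, containing no cylinder. -/
structure StrictIdeal where
  sets : Set (Set BinSeq)
  empty_mem : ∅ ∈ sets
  subset_mem : ∀ S ∈ sets, ∀ R, R ⊆ S → R ∈ sets
  union_mem : ∀ S ∈ sets, ∀ T ∈ sets, S ∪ T ∈ sets
  no_cyl : ∀ (ω : BinSeq) (t : ℕ), cyl ω t ∉ sets

/-- The collection `A = {(F ∩ L) ∪ S : F ∈ F, S small and in Σ, Lᶜ small and in Σ}`. -/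
def calA (A : SetAlgebra BinSeq) (I : StrictIdeal) : Set (Set BinSeq) :=
  {E | ∃ F L S : Set BinSeq, InCylAlg F ∧ S ∈ I.sets ∧ S ∈ A.sets ∧
        Lᶜ ∈ I.sets ∧ Lᶜ ∈ A.sets ∧ E = (F ∩ L) ∪ S}


/-!
The sets of `F` are clopen in the product topology of `{0,1}^∞`, and a nonempty open set
contains a cylinder, so no nonempty open set is small. Every set of the form `(F ∩ L) ∪ S`
differs from `F` by a small set, and two sets of `F` that differ by a small set differ by a
small open set, hence coincide: this makes `π̃` well defined. If `E₁` and `E₂` are disjoint,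
`F₁ ∩ F₂` is open and small, hence empty, and additivity of `π̃` reduces to that of `π`.
-/

open scoped symmDiff

lemma union_symmDiff_union_subset {α : Type*} (s₁ s₂ t₁ t₂ : Set α) :
    (s₁ ∪ s₂) ∆ (t₁ ∪ t₂) ⊆ s₁ ∆ t₁ ∪ s₂ ∆ t₂ := by
  intro x
  simp only [Set.mem_symmDiff, Set.mem_union]
  tauto

lemma inter_subset_symmDiff_union_symmDiff {α : Type*} {s₁ s₂ : Set α} (h : Disjoint s₁ s₂)
    (t₁ t₂ : Set α) : t₁ ∩ t₂ ⊆ s₁ ∆ t₁ ∪ s₂ ∆ t₂ := by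
  intro x ⟨hx₁, hx₂⟩
  have := @Set.disjoint_left.1 h x
  simp only [Set.mem_symmDiff, Set.mem_union]
  tauto

lemma inter_union_symmDiff_subset {α : Type*} (F L S : Set α) :
    ((F ∩ L) ∪ S) ∆ F ⊆ Lᶜ ∪ S := by
  intro x
  simp only [Set.mem_symmDiff, Set.mem_union, Set.mem_inter_iff, Set.mem_compl_iff]
  tauto

lemma isClopen_cyl (ω : BinSeq) (t : ℕ) : IsClopen (cyl ω t) := by
  refine ⟨?_, PiNat.isOpen_cylinder _ ω t⟩
  rw [show cyl ω t = PiNat.cylinder ω t from rfl, PiNat.cylinder_eq_pi]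
  exact isClosed_set_pi fun _ _ => isClosed_discrete _

lemma InCylAlg.isClopen {F : Set BinSeq} (hF : InCylAlg F) : IsClopen F := by
  obtain ⟨n, f, rfl⟩ := hF
  exact isClopen_iUnion_of_finite fun i => isClopen_cyl _ _

lemma inCylAlg_empty : InCylAlg ∅ :=
  ⟨0, Fin.elim0, (Set.iUnion_of_empty _).symm⟩

lemma InCylAlg.union {F G : Set BinSeq} (hF : InCylAlg F) (hG : InCylAlg G) :
    InCylAlg (F ∪ G) := by
  obtain ⟨n, f, rfl⟩ := hF
  obtain ⟨m, g, rfl⟩ := hG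
  refine ⟨n + m, Sum.elim f g ∘ finSumFinEquiv.symm, ?_⟩
  simp only [Function.comp_apply]
  rw [finSumFinEquiv.symm.surjective.iUnion_comp
    (fun x => cyl (Sum.elim f g x).1 (Sum.elim f g x).2), Set.iUnion_sum]
  simp

namespace StrictIdeal

variable (I : StrictIdeal)

lemma eq_empty_of_isOpen_of_subset {U S : Set BinSeq} (hU : IsOpen U) (hS : S ∈ I.sets)
    (hUS : U ⊆ S) : U = ∅ := by
  refine Set.eq_empty_of_forall_notMem fun x hx => ?_
  obtain ⟨_, ⟨y, t, rfl⟩, -, hsub⟩ :=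
    (PiNat.isTopologicalBasis_cylinders _).exists_subset_of_mem_open hx hU
  exact I.no_cyl y t (I.subset_mem S hS _ (hsub.trans hUS))

lemma eq_of_symmDiff_mem {F G : Set BinSeq} (hF : IsClopen F) (hG : IsClopen G)
    (h : F ∆ G ∈ I.sets) : F = G := by
  have hopen : IsOpen (F ∆ G) :=
    (hF.isOpen.sdiff hG.isClosed).union (hG.isOpen.sdiff hF.isClosed)
  exact symmDiff_eq_bot.1 (I.eq_empty_of_isOpen_of_subset hopen h subset_rfl)

lemma symmDiff_mem_trans {E F G : Set BinSeq} (hEF : E ∆ F ∈ I.sets) (hFG : F ∆ G ∈ I.sets) :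
    E ∆ G ∈ I.sets :=
  I.subset_mem _ (I.union_mem _ hEF _ hFG) _ (symmDiff_triangle E F G)

open Classical in
/-- The paper's `π̃`. -/
noncomputable def extend (π : Set BinSeq → ℝ) (E : Set BinSeq) : ℝ :=
  if h : ∃ F, InCylAlg F ∧ E ∆ F ∈ I.sets then π h.choose else 0

lemma extend_eq (π : Set BinSeq → ℝ) {E F : Set BinSeq} (hF : InCylAlg F)
    (hEF : E ∆ F ∈ I.sets) : I.extend π E = π F := by
  have h : ∃ F, InCylAlg F ∧ E ∆ F ∈ I.sets := ⟨F, hF, hEF⟩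
  obtain ⟨hF', hEF'⟩ := h.choose_spec
  rw [extend, dif_pos h]
  exact congrArg π <| I.eq_of_symmDiff_mem hF'.isClopen hF.isClopen <|
    I.symmDiff_mem_trans (symmDiff_comm E _ ▸ hEF') hEF

lemma inter_union_symmDiff_mem {F L S : Set BinSeq} (hL : Lᶜ ∈ I.sets) (hS : S ∈ I.sets) :
    ((F ∩ L) ∪ S) ∆ F ∈ I.sets :=
  I.subset_mem _ (I.union_mem _ hL _ hS) _ (inter_union_symmDiff_subset F L S)

lemma exists_symmDiff_mem_of_mem_calA {A : SetAlgebra BinSeq} {E : Set BinSeq}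
    (hE : E ∈ calA A I) : ∃ F, InCylAlg F ∧ E ∆ F ∈ I.sets := by
  obtain ⟨F, L, S, hF, hS, -, hL, -, rfl⟩ := hE
  exact ⟨F, hF, I.inter_union_symmDiff_mem hL hS⟩

lemma extend_union {π : Set BinSeq → ℝ}
    (hadd : ∀ F G, InCylAlg F → InCylAlg G → Disjoint F G → π (F ∪ G) = π F + π G)
    {E₁ E₂ F₁ F₂ : Set BinSeq} (hF₁ : InCylAlg F₁) (hF₂ : InCylAlg F₂)
    (h₁ : E₁ ∆ F₁ ∈ I.sets) (h₂ : E₂ ∆ F₂ ∈ I.sets) (hE : Disjoint E₁ E₂) :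
    I.extend π (E₁ ∪ E₂) = I.extend π E₁ + I.extend π E₂ := by
  have hsmall : E₁ ∆ F₁ ∪ E₂ ∆ F₂ ∈ I.sets := I.union_mem _ h₁ _ h₂
  have hF : Disjoint F₁ F₂ := Set.disjoint_iff_inter_eq_empty.2 <|
    I.eq_empty_of_isOpen_of_subset (hF₁.isClopen.isOpen.inter hF₂.isClopen.isOpen) hsmall
      (inter_subset_symmDiff_union_symmDiff hE F₁ F₂)
  rw [I.extend_eq π (hF₁.union hF₂)
      (I.subset_mem _ hsmall _ (union_symmDiff_union_subset E₁ E₂ F₁ F₂)),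
    I.extend_eq π hF₁ h₁, I.extend_eq π hF₂ h₂, hadd F₁ F₂ hF₁ hF₂ hF]

end StrictIdeal

theorem tilde_pi_well_defined_and_additive_general
    (A : SetAlgebra BinSeq)
    (I : StrictIdeal)
    (π : Set BinSeq → ℝ)
    (hadd : ∀ F G, InCylAlg F → InCylAlg G → Disjoint F G → π (F ∪ G) = π F + π G) :
    ∃ πt : Set BinSeq → ℝ,
      (∀ F L S : Set BinSeq, InCylAlg F → S ∈ I.sets → S ∈ A.sets →
        Lᶜ ∈ I.sets → Lᶜ ∈ A.sets → πt ((F ∩ L) ∪ S) = π F) ∧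
      (∀ E₁ ∈ calA A I, ∀ E₂ ∈ calA A I, Disjoint E₁ E₂ →
        πt (E₁ ∪ E₂) = πt E₁ + πt E₂) ∧
      (∀ S, S ∈ I.sets → S ∈ A.sets → πt S = 0) := by
  refine ⟨I.extend π, ?_, ?_, ?_⟩
  · intro F L S hF hS _ hL _
    exact I.extend_eq π hF (I.inter_union_symmDiff_mem hL hS)
  · intro E₁ hE₁ E₂ hE₂ hE
    obtain ⟨F₁, hF₁, h₁⟩ := I.exists_symmDiff_mem_of_mem_calA hE₁
    obtain ⟨F₂, hF₂, h₂⟩ := I.exists_symmDiff_mem_of_mem_calA hE₂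
    exact I.extend_union hadd hF₁ hF₂ h₁ h₂ hE
  · intro S hS _
    have hπ_empty : π ∅ = 0 := by
      simpa using hadd ∅ ∅ inCylAlg_empty inCylAlg_empty disjoint_bot_left
    rw [I.extend_eq π inCylAlg_empty (by rwa [← Set.bot_eq_empty, symmDiff_bot]), hπ_empty]

/-- given a finitely additive probability `π` on the cylinder algebra,
the set function `π̃((F ∩ L) ∪ S) = π(F)` on `calA` is well defined (i.e. there is a
function satisfying this identity for every representation), finitely additive on
`calA`, and vanishes on small events. -/
theorem tilde_pi_well_defined_and_additive
    (A : SetAlgebra BinSeq) (hσ : A.IsSigmaAlgebra)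
    (hcyl : ∀ (ω : BinSeq) (t : ℕ), cyl ω t ∈ A.sets)
    (I : StrictIdeal)
    (π : Set BinSeq → ℝ)
    (hnn : ∀ F, InCylAlg F → 0 ≤ π F)
    (htot : π Set.univ = 1)
    (hadd : ∀ F G, InCylAlg F → InCylAlg G → Disjoint F G → π (F ∪ G) = π F + π G) :
    ∃ πt : Set BinSeq → ℝ,
      (∀ F L S : Set BinSeq, InCylAlg F → S ∈ I.sets → S ∈ A.sets →
        Lᶜ ∈ I.sets → Lᶜ ∈ A.sets → πt ((F ∩ L) ∪ S) = π F) ∧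
      (∀ E₁ ∈ calA A I, ∀ E₂ ∈ calA A I, Disjoint E₁ E₂ →
        πt (E₁ ∪ E₂) = πt E₁ + πt E₂) ∧
      (∀ S, S ∈ I.sets → S ∈ A.sets → πt S = 0) :=
  tilde_pi_well_defined_and_additive_general A I π hadd
end
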